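/- arXiv:2602.05591 — 8 statements merged into one kernel-verified Lean document; each statement's English description precedes it below -/
import Mathlib

section
/- Let S be a positive integer, σ ∈ ℝ^S with σ_s > 0 for all s, b ∈ ℝ^S with b_s ≥ 0 for all s, p̄ in the probability simplex Δ_S, and β ∈ ℝ with min_s b_s ≤ β. Then inf{ Σ_{s=1}^S σ_s |p_s − p̄_s| : p ∈ Δ_S, ⟨b, p⟩ ≤ β } = sup{ (⟨b, p̄⟩ − β)·α − Σ_{s=1}^S p̄_s · max(0, b_s α − min_{s'}(b_{s'} α + σ_{s'}) − σ_s) : α ∈ ℝ, α ≥ 0 }. -/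
set_option maxHeartbeats 1000000

open scoped BigOperators

lemma aux_pointwise (σs c q x : ℝ) (hσ : 0 < σs) (hq : 0 ≤ q) (hx : 0 ≤ x)
    (hc : -σs ≤ c) :
    c * q - q * max 0 (c - σs) ≤ σs * |x - q| + c * x := by
  rcases le_or_gt c σs with h | h
  · rw [max_eq_left (by linarith)]
    have h1 : c * (q - x) ≤ |c| * |q - x| := by
      calc c * (q - x) ≤ |c * (q - x)| := le_abs_self _
        _ = |c| * |q - x| := abs_mul _ _
    have h2 : |c| ≤ σs := abs_le.2 ⟨hc, h⟩
    have h3 : |c| * |q - x| ≤ σs * |q - x| :=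
      mul_le_mul_of_nonneg_right h2 (abs_nonneg _)
    rw [abs_sub_comm q x] at h1 h3
    linarith
  · rw [max_eq_right (by linarith)]
    have h1 : σs * (q - x) ≤ σs * |x - q| := by
      have : q - x ≤ |x - q| := by rw [abs_sub_comm]; exact le_abs_self _
      exact mul_le_mul_of_nonneg_left this hσ.le
    have h2 : σs * x ≤ c * x := mul_le_mul_of_nonneg_right h.le hx
    nlinarith

lemma weakDuality {S : ℕ} (σ b pbar p : Fin S → ℝ) (hσ : ∀ s, 0 < σ s)
    (hpbar1 : ∀ s, 0 ≤ pbar s) (hpbar2 : ∑ s, pbar s = 1)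
    (hp1 : ∀ s, 0 ≤ p s) (hp2 : ∑ s, p s = 1) (β α : ℝ) (hα : 0 ≤ α)
    (hpβ : ∑ s, b s * p s ≤ β) :
    (∑ s, b s * pbar s - β) * α -
      ∑ s, pbar s * max 0 (b s * α - (⨅ s', (b s' * α + σ s')) - σ s)
      ≤ ∑ s, σ s * |p s - pbar s| := by
  have hSpos : 0 < S := by
    rcases Nat.eq_zero_or_pos S with h | h
    · subst h; simp at hp2
    · exact h
  haveI : Nonempty (Fin S) := ⟨⟨0, hSpos⟩⟩
  set m : ℝ := ⨅ s', (b s' * α + σ s') with hm_def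
  have hm : ∀ s, m ≤ b s * α + σ s := fun s =>
    ciInf_le (Finite.bddBelow_range _) s
  have hpt : ∀ s, (b s * α - m) * pbar s - pbar s * max 0 (b s * α - m - σ s)
      ≤ σ s * |p s - pbar s| + (b s * α - m) * p s := by
    intro s
    have := aux_pointwise (σ s) (b s * α - m) (pbar s) (p s) (hσ s)
      (hpbar1 s) (hp1 s) (by have := hm s; linarith)
    have harg : b s * α - m - σ s = (b s * α - m) - σ s := by ring
    rw [harg]
    linarith [this]
  have hsum := Finset.sum_le_sum (fun s (_ : s ∈ Finset.univ) => hpt s)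
  have e1 : ∑ s, ((b s * α - m) * pbar s - pbar s * max 0 (b s * α - m - σ s))
      = α * (∑ s, b s * pbar s) - m - ∑ s, pbar s * max 0 (b s * α - m - σ s) := by
    rw [Finset.sum_sub_distrib]
    congr 1
    have : ∑ s, (b s * α - m) * pbar s
        = α * (∑ s, b s * pbar s) - m * (∑ s, pbar s) := by
      rw [Finset.mul_sum, Finset.mul_sum, ← Finset.sum_sub_distrib]
      exact Finset.sum_congr rfl fun s _ => by ring
    rw [this, hpbar2]; ring
  have e2 : ∑ s, (σ s * |p s - pbar s| + (b s * α - m) * p s)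
      = (∑ s, σ s * |p s - pbar s|) + (α * (∑ s, b s * p s) - m) := by
    rw [Finset.sum_add_distrib]
    congr 1
    have : ∑ s, (b s * α - m) * p s
        = α * (∑ s, b s * p s) - m * (∑ s, p s) := by
      rw [Finset.mul_sum, Finset.mul_sum, ← Finset.sum_sub_distrib]
      exact Finset.sum_congr rfl fun s _ => by ring
    rw [this, hp2]; ring
  rw [e1, e2] at hsum
  have : α * (∑ s, b s * p s) ≤ α * β := mul_le_mul_of_nonneg_left hpβ hα
  linarith

lemma localConst {S : ℕ} (σ b : Fin S → ℝ)
    {α₀ d m₀ : ℝ} (hd : d = 1 ∨ d = -1) {t₀ : Fin S}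
    (hm₀ : ∀ s, m₀ ≤ b s * α₀ + σ s) (ht₀ : b t₀ * α₀ + σ t₀ = m₀)
    (hT : ∀ s, b s * α₀ + σ s = m₀ → 0 ≤ d * (b s - b t₀))
    {ψ : Fin S → Prop}
    (hψ : ∀ s, ψ s → 0 < b s * α₀ - m₀ - σ s ∨
      (0 ≤ b s * α₀ - m₀ - σ s ∧ 0 < d * (b s - b t₀)))
    (hψ' : ∀ s, ¬ ψ s → b s * α₀ - m₀ - σ s < 0 ∨
      (b s * α₀ - m₀ - σ s ≤ 0 ∧ d * (b s - b t₀) < 0)) :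
    ∃ ε > 0, ∀ α, 0 < d * (α - α₀) → d * (α - α₀) < ε →
      (∀ u, b t₀ * α + σ t₀ ≤ b u * α + σ u) ∧
      (∀ u, b u * α + σ u = b t₀ * α + σ t₀ → b u = b t₀) ∧
      (∀ s, (0 ≤ b s * α - (b t₀ * α + σ t₀) - σ s ↔ ψ s)) := by
  classical
  haveI : Nonempty (Fin S) := ⟨t₀⟩
  set εf : Fin S → ℝ := fun s =>
    min (if b s * α₀ + σ s = m₀ then 1
          else (b s * α₀ + σ s - m₀) / (|b s - b t₀| + 1))
        (if b s * α₀ - m₀ - σ s = 0 then 1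
          else |b s * α₀ - m₀ - σ s| / (|b s - b t₀| + 1)) with hεf
  have habs : ∀ s : Fin S, (0:ℝ) < |b s - b t₀| + 1 := fun s => by positivity
  have hεfpos : ∀ s, 0 < εf s := by
    intro s
    rw [hεf]
    apply lt_min
    · split_ifs with h
      · norm_num
      · have := hm₀ s
        have : 0 < b s * α₀ + σ s - m₀ := by
          rcases lt_or_eq_of_le (hm₀ s) with h' | h'
          · linarith
          · exact absurd h'.symm h
        exact div_pos this (habs s)
    · split_ifs with h
      · norm_num
      · exact div_pos (abs_pos.2 h) (habs s)
  refine ⟨Finset.univ.inf' Finset.univ_nonempty εf, ?_, ?_⟩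
  · rw [gt_iff_lt, Finset.lt_inf'_iff]
    exact fun s _ => hεfpos s
  intro α hδpos hδε
  have hdd : d * d = 1 := by rcases hd with h | h <;> rw [h] <;> norm_num
  have habsδ : |α - α₀| = d * (α - α₀) := by
    rcases hd with rfl | rfl
    · rw [one_mul] at hδpos ⊢
      exact abs_of_pos hδpos
    · rw [neg_one_mul] at hδpos ⊢
      rw [abs_of_neg (by linarith : α - α₀ < 0)]
  obtain ⟨δ, hδ⟩ : ∃ δ : ℝ, δ = d * (α - α₀) := ⟨_, rfl⟩
  rw [← hδ] at hδpos hδε habsδ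
  have hεle : ∀ s : Fin S, δ < εf s := fun s =>
    lt_of_lt_of_le hδε (Finset.inf'_le _ (Finset.mem_univ s))
  -- key rewriting: for any s,
  have hkey : ∀ s, (b s * α + σ s) - (b t₀ * α + σ t₀)
      = (b s * α₀ + σ s - m₀) + (α - α₀) * (b s - b t₀) := by
    intro s; rw [← ht₀]; ring
  have hkey2 : ∀ s, b s * α - (b t₀ * α + σ t₀) - σ s
      = (b s * α₀ - m₀ - σ s) + (α - α₀) * (b s - b t₀) := by
    intro s; rw [← ht₀]; ring
  have hprod : ∀ s, (α - α₀) * (b s - b t₀) = δ * (d * (b s - b t₀)) := by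
    intro s
    rw [hδ]
    have : d * (α - α₀) * (d * (b s - b t₀)) = (d * d) * ((α - α₀) * (b s - b t₀)) := by
      ring
    rw [this, hdd, one_mul]
  have hbound : ∀ s, |(α - α₀) * (b s - b t₀)| = δ * |b s - b t₀| := by
    intro s; rw [abs_mul, habsδ]
  -- strict positivity off the argmin set
  have hstrict : ∀ u, b u * α₀ + σ u ≠ m₀ → b t₀ * α + σ t₀ < b u * α + σ u := by
    intro u hu
    have hD : 0 < b u * α₀ + σ u - m₀ := by
      rcases lt_or_eq_of_le (hm₀ u) with h' | h'
      · linarith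
      · exact absurd h'.symm hu
    have h1 : δ < (b u * α₀ + σ u - m₀) / (|b u - b t₀| + 1) := by
      have := hεle u
      rw [hεf] at this
      have := lt_of_lt_of_le this (min_le_left _ _)
      rwa [if_neg hu] at this
    have h2 : δ * |b u - b t₀| < b u * α₀ + σ u - m₀ := by
      calc δ * |b u - b t₀| ≤ δ * (|b u - b t₀| + 1) := by nlinarith [hδpos]
        _ < (b u * α₀ + σ u - m₀) / (|b u - b t₀| + 1) * (|b u - b t₀| + 1) := by
            apply mul_lt_mul_of_pos_right h1 (habs u)
        _ = b u * α₀ + σ u - m₀ := by field_simp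
    have h3 : -((α - α₀) * (b u - b t₀)) ≤ δ * |b u - b t₀| := by
      rw [← hbound u]; exact neg_le_abs _
    have := hkey u
    linarith
  constructor
  · intro u
    by_cases hu : b u * α₀ + σ u = m₀
    · have h1 : 0 ≤ δ * (d * (b u - b t₀)) :=
        mul_nonneg hδpos.le (hT u hu)
      have := hkey u
      rw [hprod u] at this
      linarith [hu ▸ (le_refl m₀)]
      -- (b u α + σ u) - (b t₀ α + σ t₀) = 0 + nonneg
    · exact (hstrict u hu).le
  constructor
  · intro u hu
    by_cases h : b u * α₀ + σ u = m₀
    · have := hkey u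
      rw [hprod u, h] at this
      have h0 : δ * (d * (b u - b t₀)) = 0 := by
        rw [hu] at this; linarith
      have : d * (b u - b t₀) = 0 := by
        rcases mul_eq_zero.1 h0 with h' | h'
        · exact absurd h' (ne_of_gt hδpos)
        · exact h'
      rcases hd with h | h <;> rw [h] at this <;> linarith
    · exact absurd hu (ne_of_gt (hstrict u h))
  · intro s
    by_cases hs : ψ s
    · refine iff_of_true ?_ hs
      rw [hkey2 s, hprod s]
      rcases hψ s hs with h | ⟨h1, h2⟩
      · -- φ₀ > 0, use ε bound
        have hne : b s * α₀ - m₀ - σ s ≠ 0 := ne_of_gt h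
        have he : δ < |b s * α₀ - m₀ - σ s| / (|b s - b t₀| + 1) := by
          have := hεle s
          rw [hεf] at this
          have := lt_of_lt_of_le this (min_le_right _ _)
          rwa [if_neg hne] at this
        have h2 : δ * |b s - b t₀| < |b s * α₀ - m₀ - σ s| := by
          calc δ * |b s - b t₀| ≤ δ * (|b s - b t₀| + 1) := by nlinarith [hδpos]
            _ < |b s * α₀ - m₀ - σ s| / (|b s - b t₀| + 1) * (|b s - b t₀| + 1) :=
                mul_lt_mul_of_pos_right he (habs s)
            _ = |b s * α₀ - m₀ - σ s| := by field_simp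
        rw [abs_of_pos h] at h2
        have h3 : -(δ * (d * (b s - b t₀))) ≤ δ * |b s - b t₀| := by
          rw [← hprod s, ← hbound s]; exact neg_le_abs _
        linarith
      · have := mul_nonneg hδpos.le h2.le
        linarith
    · refine iff_of_false ?_ hs
      rw [hkey2 s, hprod s]
      push_neg
      rcases hψ' s hs with h | ⟨h1, h2⟩
      · have hne : b s * α₀ - m₀ - σ s ≠ 0 := ne_of_lt h
        have he : δ < |b s * α₀ - m₀ - σ s| / (|b s - b t₀| + 1) := by
          have := hεle s
          rw [hεf] at this
          have := lt_of_lt_of_le this (min_le_right _ _)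
          rwa [if_neg hne] at this
        have h2 : δ * |b s - b t₀| < |b s * α₀ - m₀ - σ s| := by
          calc δ * |b s - b t₀| ≤ δ * (|b s - b t₀| + 1) := by nlinarith [hδpos]
            _ < |b s * α₀ - m₀ - σ s| / (|b s - b t₀| + 1) * (|b s - b t₀| + 1) :=
                mul_lt_mul_of_pos_right he (habs s)
            _ = |b s * α₀ - m₀ - σ s| := by field_simp
        rw [abs_of_neg h] at h2
        have h3 : δ * (d * (b s - b t₀)) ≤ δ * |b s - b t₀| := by
          rw [← hprod s, ← hbound s]; exact le_abs_self _
        linarith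
      · have := mul_pos hδpos (neg_pos.2 h2)
        nlinarith

lemma strongPair {S : ℕ} (hS : 0 < S)
    (σ : Fin S → ℝ) (hσ : ∀ s, 0 < σ s)
    (b : Fin S → ℝ) (hb : ∀ s, 0 ≤ b s)
    (pbar : Fin S → ℝ) (hpbar1 : ∀ s, 0 ≤ pbar s) (hpbar2 : ∑ s, pbar s = 1)
    (β : ℝ) (hβ : (⨅ s, b s) ≤ β) (hv : β < ∑ s, b s * pbar s) :
    ∃ α₀ : ℝ, 0 ≤ α₀ ∧ ∃ p : Fin S → ℝ, (∀ s, 0 ≤ p s) ∧ (∑ s, p s = 1) ∧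
      (∑ s, b s * p s ≤ β) ∧
      (∑ s, σ s * |p s - pbar s|) =
        (∑ s, b s * pbar s - β) * α₀ -
          ∑ s, pbar s * max 0 (b s * α₀ - (⨅ s', (b s' * α₀ + σ s')) - σ s) := by
  classical
  haveI : Nonempty (Fin S) := ⟨⟨0, hS⟩⟩
  set m : ℝ → ℝ := fun α => ⨅ s', (b s' * α + σ s') with hm_def
  have hm : ∀ α, ∀ s, m α ≤ b s * α + σ s := fun α s =>
    ciInf_le (Finite.bddBelow_range _) s
  have hmattain : ∀ α, ∃ t, b t * α + σ t = m α := by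
    intro α
    obtain ⟨t, ht⟩ := Finite.exists_min (fun s => b s * α + σ s)
    exact ⟨t, le_antisymm (le_ciInf ht) (hm α t)⟩
  -- extremal argmin selectors
  have hTmin : ∀ α : ℝ, ∃ t, (b t * α + σ t = m α) ∧
      ∀ u, b u * α + σ u = m α → b t ≤ b u := by
    intro α
    obtain ⟨t₁, ht₁⟩ := hmattain α
    obtain ⟨t, htT, htmin⟩ := Finset.exists_min_image
      (Finset.univ.filter fun u => b u * α + σ u = m α) b ⟨t₁, by simp [ht₁]⟩
    refine ⟨t, (Finset.mem_filter.1 htT).2, fun u hu => htmin u (by simp [hu])⟩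
  have hTmax : ∀ α : ℝ, ∃ t, (b t * α + σ t = m α) ∧
      ∀ u, b u * α + σ u = m α → b u ≤ b t := by
    intro α
    obtain ⟨t₁, ht₁⟩ := hmattain α
    obtain ⟨t, htT, htmax⟩ := Finset.exists_max_image
      (Finset.univ.filter fun u => b u * α + σ u = m α) b ⟨t₁, by simp [ht₁]⟩
    refine ⟨t, (Finset.mem_filter.1 htT).2, fun u hu => htmax u (by simp [hu])⟩
  choose tmin htminT htminLe using hTmin
  choose tmax htmaxT htmaxGe using hTmax
  clear_value m
  -- the closed exceedance set and G function
  set Eb : ℝ → Finset (Fin S) :=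
    fun α => Finset.univ.filter (fun s => 0 ≤ b s * α - m α - σ s) with hEb_def
  set G : ℝ → ℝ :=
    fun α => ∑ s ∈ (Eb α)ᶜ, b s * pbar s + b (tmin α) * ∑ s ∈ Eb α, pbar s
    with hG_def
  clear_value Eb G
  -- Step A : a large α with G α ≤ β
  have hbig : ∃ A : ℝ, 0 ≤ A ∧ G A ≤ β := by
    obtain ⟨sm, hsm⟩ := Finite.exists_min b
    have hsmβ : b sm ≤ β := le_trans (le_ciInf hsm) hβ
    set A : ℝ := 1 + Finset.univ.sup' Finset.univ_nonempty
      (fun s => if b sm < b s then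
          max ((σ s + σ sm) / (b s - b sm)) (σ sm / (b s - b sm)) else 0)
      with hA_def
    have hAs : ∀ s, b sm < b s →
        (σ s + σ sm) / (b s - b sm) < A ∧ σ sm / (b s - b sm) < A := by
      intro s hs
      have h1 := Finset.le_sup' (fun s => if b sm < b s then
          max ((σ s + σ sm) / (b s - b sm)) (σ sm / (b s - b sm)) else 0)
        (Finset.mem_univ s)
      rw [if_pos hs] at h1
      constructor
      · have := le_max_left ((σ s + σ sm) / (b s - b sm)) (σ sm / (b s - b sm))
        rw [hA_def]; linarith
      · have := le_max_right ((σ s + σ sm) / (b s - b sm)) (σ sm / (b s - b sm))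
        rw [hA_def]; linarith
    have hA0 : 0 ≤ A := by
      have h1 := Finset.le_sup' (fun s => if b sm < b s then
          max ((σ s + σ sm) / (b s - b sm)) (σ sm / (b s - b sm)) else 0)
        (Finset.mem_univ sm)
      rw [if_neg (lt_irrefl _)] at h1
      rw [hA_def]; linarith
    refine ⟨A, hA0, ?_⟩
    -- all states with b s > b sm are in Eb A
    have hmem : ∀ s, b sm < b s → s ∈ Eb A := by
      intro s hs
      rw [hEb_def]
      simp only [Finset.mem_filter, Finset.mem_univ, true_and]
      have h1 : (σ s + σ sm) / (b s - b sm) < A := (hAs s hs).1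
      have h2 : σ s + σ sm < A * (b s - b sm) := by
        rw [div_lt_iff₀ (by linarith)] at h1
        linarith [h1]
      have h3 := hm A sm
      nlinarith
    -- b (tmin A) = b sm
    have htm : b (tmin A) = b sm := by
      refine le_antisymm ?_ (hsm _)
      by_contra h
      push_neg at h
      have h2 : σ sm / (b (tmin A) - b sm) < A := (hAs _ h).2
      have h3 : σ sm < A * (b (tmin A) - b sm) := by
        rw [div_lt_iff₀ (by linarith)] at h2
        linarith
      have h4 := htminT A
      have h5 := hm A sm
      nlinarith [hσ (tmin A)]
    -- conclude
    rw [hG_def]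
    simp only
    have hle : ∀ s ∈ (Eb A)ᶜ, b s * pbar s ≤ b sm * pbar s := by
      intro s hs
      rcases lt_or_ge (b sm) (b s) with h | h
      · exact absurd (hmem s h) (Finset.mem_compl.1 hs)
      · exact mul_le_mul_of_nonneg_right h (hpbar1 s)
    calc ∑ s ∈ (Eb A)ᶜ, b s * pbar s + b (tmin A) * ∑ s ∈ Eb A, pbar s
        ≤ ∑ s ∈ (Eb A)ᶜ, b sm * pbar s + b sm * ∑ s ∈ Eb A, pbar s := by
          rw [htm]
          exact add_le_add_left (Finset.sum_le_sum hle) _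
      _ = b sm * ∑ s, pbar s := by
          rw [Finset.mul_sum, Finset.mul_sum, ← Finset.sum_compl_add_sum (Eb A)]
      _ ≤ β := by rw [hpbar2, mul_one]; exact hsmβ
  -- Step B : α₀ as infimum
  obtain ⟨A, hA0, hAβ⟩ := hbig
  set Sβ : Set ℝ := {α | 0 ≤ α ∧ G α ≤ β} with hSβ_def
  have hSne : Sβ.Nonempty := ⟨A, hA0, hAβ⟩
  have hSbdd : BddBelow Sβ := ⟨0, fun x hx => hx.1⟩
  set α₀ : ℝ := sInf Sβ with hα₀_def
  have hα₀0 : 0 ≤ α₀ := le_csInf hSne (fun x hx => hx.1)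
  have hmpos : ∀ α, 0 ≤ α → 0 < m α := by
    intro α hα
    obtain ⟨t, ht⟩ := hmattain α
    rw [← ht]
    have := mul_nonneg (hb t) hα
    nlinarith [hσ t]
  -- for t in argmin at any α ≥ 0: m α > b t * α, useful below
  have hmgt : ∀ s, 0 ≤ b s * α₀ - m α₀ - σ s → 0 < b s - b (tmin α₀) ∧ 0 < b s - b (tmax α₀) := by
    intro s hs
    have h1 : b (tmin α₀) * α₀ + σ (tmin α₀) = m α₀ := htminT α₀
    have h2 : b (tmax α₀) * α₀ + σ (tmax α₀) = m α₀ := htmaxT α₀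
    have hσ1 := hσ (tmin α₀); have hσ2 := hσ (tmax α₀); have hσ3 := hσ s
    constructor
    · by_contra h
      push_neg at h
      have : b s * α₀ ≤ b (tmin α₀) * α₀ := by nlinarith
      nlinarith
    · by_contra h
      push_neg at h
      have : b s * α₀ ≤ b (tmax α₀) * α₀ := by nlinarith
      nlinarith
  -- Step C : G α₀ ≤ β
  have hGα₀ : G α₀ ≤ β := by
    obtain ⟨ε, hε, hloc⟩ := localConst (ψ := fun s => 0 ≤ b s * α₀ - m α₀ - σ s)
      σ b (Or.inl rfl) (hm α₀) (htminT α₀)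
      (fun s hs => by
        have := htminLe α₀ s hs
        rw [one_mul]; linarith)
      (fun s hs => Or.inr ⟨hs, by
        rw [one_mul]
        exact (hmgt s hs).1⟩)
      (fun s hs => Or.inl (lt_of_not_ge hs))
    obtain ⟨α, hαS, hαlt⟩ := (csInf_lt_iff hSbdd hSne).1
      (by rw [← hα₀_def]; linarith : sInf Sβ < α₀ + ε)
    have hα₀α : α₀ ≤ α := csInf_le hSbdd hαS
    rcases eq_or_lt_of_le hα₀α with heq | hlt
    · rw [heq]; exact hαS.2
    obtain ⟨h1, h2, h3⟩ := hloc α (by rw [one_mul]; linarith)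
      (by rw [one_mul]; linarith)
    have hmα : m α = b (tmin α₀) * α + σ (tmin α₀) :=
      le_antisymm (hm α (tmin α₀)) (by rw [hm_def]; exact le_ciInf h1)
    have hEbeq : Eb α = Eb α₀ := by
      ext s
      rw [hEb_def]
      simp only [Finset.mem_filter, Finset.mem_univ, true_and]
      rw [hmα]
      exact h3 s
    have hbmin : b (tmin α) = b (tmin α₀) := by
      apply h2
      rw [← hmα]
      exact htminT α
    have : G α = G α₀ := by
      rw [hG_def]
      simp only
      rw [hEbeq, hbmin]
    rw [← this]
    exact hαS.2
  -- Step D : β ≤ G⁺ α₀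
  set E : Finset (Fin S) :=
    Finset.univ.filter (fun s => 0 < b s * α₀ - m α₀ - σ s) with hE_def
  clear_value E
  have hGp : β ≤ ∑ s ∈ Eᶜ, b s * pbar s + b (tmax α₀) * ∑ s ∈ E, pbar s := by
    rcases eq_or_lt_of_le hα₀0 with hz | hpos
    · -- α₀ = 0 : E is empty
      have hEempty : E = ∅ := by
        rw [hE_def]
        apply Finset.filter_false_of_mem
        intro s _
        push_neg
        have h1 : 0 < m α₀ := hmpos α₀ hα₀0
        have h2 : b s * α₀ = 0 := by rw [← hz, mul_zero]
        nlinarith [hσ s]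
      rw [hEempty]
      simp only [Finset.sum_empty, mul_zero, add_zero, Finset.compl_empty]
      exact hv.le
    · have hpsi' : ∀ s, ¬ (0 < b s * α₀ - m α₀ - σ s) →
          b s * α₀ - m α₀ - σ s < 0 ∨
            (b s * α₀ - m α₀ - σ s ≤ 0 ∧ (-1 : ℝ) * (b s - b (tmax α₀)) < 0) := by
        intro s hs
        push_neg at hs
        rcases eq_or_lt_of_le hs with h0 | h0
        · refine Or.inr ⟨hs, ?_⟩
          have := (hmgt s h0.ge).2
          nlinarith
        · exact Or.inl h0
      obtain ⟨ε, hε, hloc⟩ := localConst (ψ := fun s => 0 < b s * α₀ - m α₀ - σ s)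
        σ b (Or.inr rfl) (hm α₀) (htmaxT α₀)
        (fun s hs => by
          have := htmaxGe α₀ s hs
          nlinarith)
        (fun s hs => Or.inl hs)
        hpsi'
      set δ : ℝ := min ε α₀ / 2 with hδ_def
      have hδpos : 0 < δ := by
        rw [hδ_def]
        have := lt_min hε hpos
        linarith
      have hδε : δ < ε := by
        rw [hδ_def]
        have := min_le_left ε α₀
        linarith
      have hδα : δ < α₀ := by
        rw [hδ_def]
        have := min_le_right ε α₀
        linarith
      set α : ℝ := α₀ - δ with hα_def
      obtain ⟨h1, h2, h3⟩ := hloc α (by rw [hα_def]; nlinarith) (by rw [hα_def]; nlinarith)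
      have hmα : m α = b (tmax α₀) * α + σ (tmax α₀) :=
        le_antisymm (hm α (tmax α₀)) (by rw [hm_def]; exact le_ciInf h1)
      have hEbeq : Eb α = E := by
        ext s
        rw [hEb_def, hE_def]
        simp only [Finset.mem_filter, Finset.mem_univ, true_and]
        rw [hmα]
        exact h3 s
      have hbmin : b (tmin α) = b (tmax α₀) := by
        apply h2
        rw [← hmα]
        exact htminT α
      have hαnot : ¬ (α ∈ Sβ) := by
        intro hmem
        have := csInf_le hSbdd hmem
        rw [← hα₀_def] at this
        rw [hα_def] at this
        linarith
      have hα0 : 0 ≤ α := by rw [hα_def]; linarith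
      have : ¬ (G α ≤ β) := fun h => hαnot ⟨hα0, h⟩
      push_neg at this
      have hGeq : G α = ∑ s ∈ Eᶜ, b s * pbar s + b (tmax α₀) * ∑ s ∈ E, pbar s := by
        rw [hG_def]
        simp only
        rw [hEbeq, hbmin]
      linarith [hGeq ▸ this]
  clear_value Sβ α₀
  -- Step E : construct the primal point via intermediate value theorem
  have hEsub : E ⊆ Eb α₀ := by
    intro s hs
    rw [hE_def] at hs
    rw [hEb_def]
    simp only [Finset.mem_filter, Finset.mem_univ, true_and] at hs ⊢
    exact hs.le
  set A₁ : ℝ := ∑ s ∈ (Eb α₀)ᶜ, b s * pbar s with hA₁_def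
  set A₂ : ℝ := ∑ s ∈ Eb α₀ \ E, b s * pbar s with hA₂_def
  set A₃ : ℝ := ∑ s ∈ E, b s * pbar s with hA₃_def
  set P₂ : ℝ := ∑ s ∈ Eb α₀ \ E, pbar s with hP₂_def
  set P₃ : ℝ := ∑ s ∈ E, pbar s with hP₃_def
  set S₂ : ℝ := ∑ s ∈ Eb α₀ \ E, σ s * pbar s with hS₂_def
  set S₃ : ℝ := ∑ s ∈ E, σ s * pbar s with hS₃_def
  clear_value A₁ A₂ A₃ P₂ P₃ S₂ S₃
  have hsplitEb : ∀ f : Fin S → ℝ, ∑ s ∈ Eb α₀ \ E, f s + ∑ s ∈ E, f s = ∑ s ∈ Eb α₀, f s :=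
    fun f => Finset.sum_sdiff hEsub
  have hcompl : Eᶜ \ (Eb α₀)ᶜ = Eb α₀ \ E := by
    ext s
    simp only [Finset.mem_sdiff, Finset.mem_compl, not_not]
    tauto
  have hsplitEc : ∀ f : Fin S → ℝ, ∑ s ∈ Eᶜ, f s = ∑ s ∈ Eb α₀ \ E, f s + ∑ s ∈ (Eb α₀)ᶜ, f s := by
    intro f
    rw [← hcompl]
    exact (Finset.sum_sdiff (Finset.compl_subset_compl.2 hEsub)).symm
  set V : ℝ → ℝ := fun u => A₁ + u * A₂ + (P₃ + (1 - u) * P₂) * (u * b (tmax α₀) + (1 - u) * b (tmin α₀)) with hV_def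
  clear_value V
  have hV0 : V 0 = G α₀ := by
    rw [hV_def, hG_def]
    simp only
    rw [← hsplitEb pbar]
    rw [← hA₁_def, ← hP₂_def, ← hP₃_def]
    ring
  have hV1 : V 1 = ∑ s ∈ Eᶜ, b s * pbar s + b (tmax α₀) * P₃ := by
    rw [hV_def]
    simp only
    rw [hsplitEc (fun s => b s * pbar s), ← hA₁_def, ← hA₂_def]
    ring
  have hVc : Continuous V := by
    rw [hV_def]
    exact (continuous_const.add (continuous_id.mul continuous_const)).add
      ((continuous_const.add ((continuous_const.sub continuous_id).mul continuous_const)).mul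
        ((continuous_id.mul continuous_const).add
          ((continuous_const.sub continuous_id).mul continuous_const)))
  have hIcc : β ∈ Set.Icc (V 0) (V 1) := ⟨hV0 ▸ hGα₀, hV1 ▸ hGp⟩
  obtain ⟨u₀, hu₀m, hVu₀⟩ := intermediate_value_Icc zero_le_one hVc.continuousOn hIcc
  obtain ⟨hu₀1, hu₀2⟩ := hu₀m
  set M : ℝ := P₃ + (1 - u₀) * P₂ with hM_def
  clear_value M
  have hP₂0 : 0 ≤ P₂ := by
    rw [hP₂_def]; exact Finset.sum_nonneg fun s _ => hpbar1 s
  have hP₃0 : 0 ≤ P₃ := by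
    rw [hP₃_def]; exact Finset.sum_nonneg fun s _ => hpbar1 s
  have hM0 : 0 ≤ M := by
    rw [hM_def]
    have : 0 ≤ (1 - u₀) * P₂ := mul_nonneg (by linarith) hP₂0
    linarith
  have htpE : tmax α₀ ∉ Eb α₀ := by
    rw [hEb_def]
    simp only [Finset.mem_filter, Finset.mem_univ, true_and, not_le]
    have := htmaxT α₀
    linarith [hσ (tmax α₀)]
  have htmE : tmin α₀ ∉ Eb α₀ := by
    rw [hEb_def]
    simp only [Finset.mem_filter, Finset.mem_univ, true_and, not_le]
    have := htminT α₀
    linarith [hσ (tmin α₀)]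
  set p : Fin S → ℝ := fun s =>
    (if s ∈ Eb α₀ then (if s ∈ E then 0 else u₀ * pbar s) else pbar s) +
      (if s = tmax α₀ then u₀ * M else 0) +
      (if s = tmin α₀ then (1 - u₀) * M else 0) with hp_def
  clear_value p
  have hbase0 : ∀ s, 0 ≤ (if s ∈ Eb α₀ then (if s ∈ E then 0 else u₀ * pbar s) else pbar s) := by
    intro s
    split_ifs with h1 h2
    · exact le_refl 0
    · exact mul_nonneg hu₀1 (hpbar1 s)
    · exact hpbar1 s
  have hifP0 : ∀ s : Fin S, 0 ≤ (if s = tmax α₀ then u₀ * M else 0) := by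
    intro s
    split_ifs
    · exact mul_nonneg hu₀1 hM0
    · exact le_refl 0
  have hifM0 : ∀ s : Fin S, 0 ≤ (if s = tmin α₀ then (1 - u₀) * M else 0) := by
    intro s
    split_ifs
    · exact mul_nonneg (by linarith) hM0
    · exact le_refl 0
  have hp0 : ∀ s, 0 ≤ p s := by
    intro s
    rw [hp_def]
    exact add_nonneg (add_nonneg (hbase0 s) (hifP0 s)) (hifM0 s)
  -- sums of the base part against a weight
  have hbase_sum : ∀ w : Fin S → ℝ,
      (∑ s, w s * (if s ∈ Eb α₀ then (if s ∈ E then 0 else u₀ * pbar s) else pbar s))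
        = ∑ s ∈ (Eb α₀)ᶜ, w s * pbar s + u₀ * ∑ s ∈ Eb α₀ \ E, w s * pbar s := by
    intro w
    rw [← Finset.sum_compl_add_sum (Eb α₀)
      (f := fun s => w s * (if s ∈ Eb α₀ then (if s ∈ E then 0 else u₀ * pbar s) else pbar s))]
    congr 1
    · apply Finset.sum_congr rfl
      intro s hs
      rw [if_neg (Finset.mem_compl.1 hs)]
    · rw [← hsplitEb (fun s => w s * (if s ∈ Eb α₀ then (if s ∈ E then 0 else u₀ * pbar s) else pbar s))]
      have e1 : ∑ s ∈ Eb α₀ \ E, w s * (if s ∈ Eb α₀ then (if s ∈ E then 0 else u₀ * pbar s) else pbar s)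
          = u₀ * ∑ s ∈ Eb α₀ \ E, w s * pbar s := by
        rw [Finset.mul_sum]
        apply Finset.sum_congr rfl
        intro s hs
        obtain ⟨h1, h2⟩ := Finset.mem_sdiff.1 hs
        rw [if_pos h1, if_neg h2]
        ring
      have e2 : ∑ s ∈ E, w s * (if s ∈ Eb α₀ then (if s ∈ E then 0 else u₀ * pbar s) else pbar s) = 0 := by
        apply Finset.sum_eq_zero
        intro s hs
        rw [if_pos (hEsub hs), if_pos hs, mul_zero]
      rw [e1, e2]
      ring
  have hite_sum : ∀ w : Fin S → ℝ, ∀ t : Fin S, ∀ c : ℝ,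
      (∑ s, w s * (if s = t then c else 0)) = w t * c := by
    intro w t c
    rw [Finset.sum_congr rfl (fun s _ => by
      rw [mul_ite, mul_zero] : ∀ s ∈ Finset.univ, w s * (if s = t then c else 0) = if s = t then w s * c else 0)]
    simp [Finset.sum_ite_eq']
  -- total mass of p is 1
  have hpsum : ∑ s, p s = 1 := by
    have := hbase_sum (fun _ => (1:ℝ))
    simp only [one_mul] at this
    have hP := hite_sum (fun _ => (1:ℝ)) (tmax α₀) (u₀ * M)
    have hM := hite_sum (fun _ => (1:ℝ)) (tmin α₀) ((1 - u₀) * M)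
    simp only [one_mul] at hP hM
    have hsplit : ∑ s, p s = (∑ s, (if s ∈ Eb α₀ then (if s ∈ E then 0 else u₀ * pbar s) else pbar s))
        + (∑ s, (if s = tmax α₀ then u₀ * M else 0)) + (∑ s, (if s = tmin α₀ then (1 - u₀) * M else 0)) := by
      rw [hp_def, ← Finset.sum_add_distrib, ← Finset.sum_add_distrib]
    have hone : ∑ s ∈ (Eb α₀)ᶜ, pbar s + (P₂ + P₃) = 1 := by
      rw [hP₂_def, hP₃_def, hsplitEb pbar, Finset.sum_compl_add_sum, hpbar2]
    have h2 : u₀ * M + (1 - u₀) * M = P₃ + (1 - u₀) * P₂ := by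
      rw [hM_def]; ring
    rw [← hP₂_def] at this
    rw [hsplit, this, hP, hM]
    linarith [h2, hone]
  -- constraint value of p is β
  have hpcon : ∑ s, b s * p s = β := by
    have hb1 := hbase_sum b
    have hP := hite_sum b (tmax α₀) (u₀ * M)
    have hM := hite_sum b (tmin α₀) ((1 - u₀) * M)
    have hsplit : ∑ s, b s * p s = (∑ s, b s * (if s ∈ Eb α₀ then (if s ∈ E then 0 else u₀ * pbar s) else pbar s))
        + (∑ s, b s * (if s = tmax α₀ then u₀ * M else 0)) + (∑ s, b s * (if s = tmin α₀ then (1 - u₀) * M else 0)) := by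
      rw [hp_def]
      rw [← Finset.sum_add_distrib, ← Finset.sum_add_distrib]
      apply Finset.sum_congr rfl
      intro s _
      ring
    rw [hsplit, hb1, hP, hM, ← hVu₀, hV_def]
    rw [← hA₁_def, ← hA₂_def]
    rw [hM_def]
    ring
  -- objective value of p
  have hpobj : ∑ s, σ s * |p s - pbar s|
      = S₃ + (1 - u₀) * S₂ + σ (tmax α₀) * (u₀ * M) + σ (tmin α₀) * ((1 - u₀) * M) := by
    rw [← Finset.sum_compl_add_sum (Eb α₀) (f := fun s => σ s * |p s - pbar s|)]
    have hEc : ∑ s ∈ (Eb α₀)ᶜ, σ s * |p s - pbar s|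
        = σ (tmax α₀) * (u₀ * M) + σ (tmin α₀) * ((1 - u₀) * M) := by
      have hterm : ∀ s ∈ (Eb α₀)ᶜ, σ s * |p s - pbar s|
          = σ s * (if s = tmax α₀ then u₀ * M else 0) + σ s * (if s = tmin α₀ then (1 - u₀) * M else 0) := by
        intro s hs
        have hmem := Finset.mem_compl.1 hs
        rw [hp_def]
        simp only
        rw [if_neg hmem]
        have harg : pbar s + (if s = tmax α₀ then u₀ * M else 0) + (if s = tmin α₀ then (1 - u₀) * M else 0) - pbar s
            = (if s = tmax α₀ then u₀ * M else 0) + (if s = tmin α₀ then (1 - u₀) * M else 0) := by ring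
        rw [harg, abs_of_nonneg (add_nonneg (hifP0 s) (hifM0 s))]
        ring
      rw [Finset.sum_congr rfl hterm, Finset.sum_add_distrib]
      have eP : ∑ s ∈ (Eb α₀)ᶜ, σ s * (if s = tmax α₀ then u₀ * M else 0) = σ (tmax α₀) * (u₀ * M) := by
        rw [Finset.sum_congr rfl (fun s _ => by
          rw [mul_ite, mul_zero] : ∀ s ∈ (Eb α₀)ᶜ, σ s * (if s = tmax α₀ then u₀ * M else 0) = if s = tmax α₀ then σ s * (u₀ * M) else 0)]
        rw [Finset.sum_ite_eq']
        rw [if_pos (Finset.mem_compl.2 htpE)]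
      have eM : ∑ s ∈ (Eb α₀)ᶜ, σ s * (if s = tmin α₀ then (1 - u₀) * M else 0) = σ (tmin α₀) * ((1 - u₀) * M) := by
        rw [Finset.sum_congr rfl (fun s _ => by
          rw [mul_ite, mul_zero] : ∀ s ∈ (Eb α₀)ᶜ, σ s * (if s = tmin α₀ then (1 - u₀) * M else 0) = if s = tmin α₀ then σ s * ((1 - u₀) * M) else 0)]
        rw [Finset.sum_ite_eq']
        rw [if_pos (Finset.mem_compl.2 htmE)]
      rw [eP, eM]
    have hEb' : ∑ s ∈ Eb α₀, σ s * |p s - pbar s| = (1 - u₀) * S₂ + S₃ := by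
      rw [← hsplitEb (fun s => σ s * |p s - pbar s|)]
      have e2 : ∑ s ∈ Eb α₀ \ E, σ s * |p s - pbar s| = (1 - u₀) * S₂ := by
        rw [hS₂_def, Finset.mul_sum]
        apply Finset.sum_congr rfl
        intro s hs
        obtain ⟨h1, h2⟩ := Finset.mem_sdiff.1 hs
        have hsP : s ≠ tmax α₀ := fun h => htpE (h ▸ h1)
        have hsM : s ≠ tmin α₀ := fun h => htmE (h ▸ h1)
        rw [hp_def]
        simp only
        rw [if_pos h1, if_neg h2, if_neg hsP, if_neg hsM]
        have harg : u₀ * pbar s + 0 + 0 - pbar s = -((1 - u₀) * pbar s) := by ring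
        rw [harg, abs_neg, abs_of_nonneg (mul_nonneg (by linarith) (hpbar1 s))]
        ring
      have e3 : ∑ s ∈ E, σ s * |p s - pbar s| = S₃ := by
        rw [hS₃_def]
        apply Finset.sum_congr rfl
        intro s hs
        have h1 := hEsub hs
        have hsP : s ≠ tmax α₀ := fun h => htpE (h ▸ h1)
        have hsM : s ≠ tmin α₀ := fun h => htmE (h ▸ h1)
        rw [hp_def]
        simp only
        rw [if_pos h1, if_pos hs, if_neg hsP, if_neg hsM]
        have harg : (0:ℝ) + 0 + 0 - pbar s = -(pbar s) := by ring
        rw [harg, abs_neg, abs_of_nonneg (hpbar1 s)]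
      rw [e2, e3]
    rw [hEc, hEb']
    ring
  -- dual value at α₀
  have hbp : ∑ s, b s * pbar s = A₁ + A₂ + A₃ := by
    rw [hA₁_def, hA₂_def, hA₃_def]
    rw [← Finset.sum_compl_add_sum (Eb α₀) (f := fun s => b s * pbar s), ← hsplitEb (fun s => b s * pbar s)]
    ring
  have hdual : (∑ s, b s * pbar s - β) * α₀ -
      ∑ s, pbar s * max 0 (b s * α₀ - m α₀ - σ s)
      = (A₁ + A₂ + A₃ - β) * α₀ - (α₀ * A₃ - m α₀ * P₃ - S₃) := by
    have hmax : ∑ s, pbar s * max 0 (b s * α₀ - m α₀ - σ s)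
        = α₀ * A₃ - m α₀ * P₃ - S₃ := by
      have e1 : ∑ s ∈ E, pbar s * max 0 (b s * α₀ - m α₀ - σ s)
          = ∑ s, pbar s * max 0 (b s * α₀ - m α₀ - σ s) := by
        apply Finset.sum_subset (Finset.subset_univ E)
        intro s _ hs
        rw [hE_def] at hs
        simp only [Finset.mem_filter, Finset.mem_univ, true_and, not_lt] at hs
        rw [max_eq_left hs, mul_zero]
      rw [← e1]
      have e2 : ∑ s ∈ E, pbar s * max 0 (b s * α₀ - m α₀ - σ s)
          = ∑ s ∈ E, (α₀ * (b s * pbar s) - m α₀ * pbar s - σ s * pbar s) := by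
        apply Finset.sum_congr rfl
        intro s hs
        rw [hE_def] at hs
        simp only [Finset.mem_filter, Finset.mem_univ, true_and] at hs
        rw [max_eq_right hs.le]
        ring
      rw [e2, Finset.sum_sub_distrib, Finset.sum_sub_distrib, ← Finset.mul_sum, ← Finset.mul_sum]
      rw [← hA₃_def, ← hP₃_def, ← hS₃_def]
    rw [hmax, hbp]
  have hS₂eq : S₂ = α₀ * A₂ - m α₀ * P₂ := by
    have e1 : ∑ s ∈ Eb α₀ \ E, σ s * pbar s
        = ∑ s ∈ Eb α₀ \ E, (α₀ * (b s * pbar s) - m α₀ * pbar s) := by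
      apply Finset.sum_congr rfl
      intro s hs
      obtain ⟨h1, h2⟩ := Finset.mem_sdiff.1 hs
      rw [hEb_def] at h1
      rw [hE_def] at h2
      simp only [Finset.mem_filter, Finset.mem_univ, true_and, not_lt] at h1 h2
      have : σ s = b s * α₀ - m α₀ := by linarith
      rw [this]
      ring
    rw [hS₂_def, e1, Finset.sum_sub_distrib, ← Finset.mul_sum, ← Finset.mul_sum]
    rw [← hA₂_def, ← hP₂_def]
  have hsigP : σ (tmax α₀) = m α₀ - b (tmax α₀) * α₀ := by
    have := htmaxT α₀
    linarith
  have hsigM : σ (tmin α₀) = m α₀ - b (tmin α₀) * α₀ := by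
    have := htminT α₀
    linarith
  have hβV : β = A₁ + u₀ * A₂ + M * (u₀ * b (tmax α₀) + (1 - u₀) * b (tmin α₀)) := by
    rw [← hVu₀, hV_def, hM_def]
  refine ⟨α₀, hα₀0, p, hp0, hpsum, hpcon.le, ?_⟩
  have hmm : (⨅ s', (b s' * α₀ + σ s')) = m α₀ := by rw [hm_def]
  rw [hmm, hpobj, hdual, hS₂eq, hsigP, hsigM, hβV, hM_def]
  ring

/-- Strong duality for the weighted 1-norm projection problem: the minimal
weighted 1-norm distance from the nominal distribution `p̄` over the
intersection of the simplex with the halfspace `⟨b, p⟩ ≤ β` equals the optimal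
value of the univariate dual problem. -/
theorem stmt3 (S : ℕ) (hS : 0 < S)
    (σ : Fin S → ℝ) (hσ : ∀ s, 0 < σ s)
    (b : Fin S → ℝ) (hb : ∀ s, 0 ≤ b s)
    (pbar : Fin S → ℝ) (hpbar : pbar ∈ stdSimplex ℝ (Fin S))
    (β : ℝ) (hβ : (⨅ s, b s) ≤ β) :
    sInf ((fun p : Fin S → ℝ => ∑ s, σ s * |p s - pbar s|) ''
        {p ∈ stdSimplex ℝ (Fin S) | ∑ s, b s * p s ≤ β})
      = sSup ((fun α : ℝ =>
          (∑ s, b s * pbar s - β) * α -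
            ∑ s, pbar s * max 0 (b s * α - (⨅ s', (b s' * α + σ s')) - σ s)) ''
          Set.Ici (0:ℝ)) := by
  haveI : Nonempty (Fin S) := ⟨⟨0, hS⟩⟩
  obtain ⟨hpbar1, hpbar2⟩ := hpbar
  -- obtain an optimal primal-dual pair
  obtain ⟨α₀, hα₀0, p₀, hp₀0, hp₀1, hp₀β, heq⟩ :
      ∃ α₀ : ℝ, 0 ≤ α₀ ∧ ∃ p : Fin S → ℝ, (∀ s, 0 ≤ p s) ∧ (∑ s, p s = 1) ∧
        (∑ s, b s * p s ≤ β) ∧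
        (∑ s, σ s * |p s - pbar s|) =
          (∑ s, b s * pbar s - β) * α₀ -
            ∑ s, pbar s * max 0 (b s * α₀ - (⨅ s', (b s' * α₀ + σ s')) - σ s) := by
    rcases le_or_gt (∑ s, b s * pbar s) β with hc | hc
    · refine ⟨0, le_refl 0, pbar, hpbar1, hpbar2, hc, ?_⟩
      have hL : ∑ s, σ s * |pbar s - pbar s| = 0 := by simp
      have hmax : ∀ s : Fin S,
          max 0 (b s * 0 - (⨅ s', (b s' * 0 + σ s')) - σ s) = 0 := by
        intro s
        apply max_eq_left
        have h1 : (0:ℝ) ≤ ⨅ s', (b s' * 0 + σ s') :=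
          le_ciInf (fun s' => by nlinarith [hσ s', hb s'])
        nlinarith [hσ s]
      have hR : ∑ s, pbar s * max 0 (b s * 0 - (⨅ s', (b s' * 0 + σ s')) - σ s) = 0 :=
        Finset.sum_eq_zero (fun s _ => by rw [hmax s, mul_zero])
      rw [hL, hR, mul_zero, sub_zero]
    · exact strongPair hS σ hσ b hb pbar hpbar1 hpbar2 β hβ hc
  have hfeas : p₀ ∈ {p ∈ stdSimplex ℝ (Fin S) | ∑ s, b s * p s ≤ β} :=
    ⟨⟨hp₀0, hp₀1⟩, hp₀β⟩
  have hPmem : (∑ s, σ s * |p₀ s - pbar s|) ∈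
      ((fun p : Fin S → ℝ => ∑ s, σ s * |p s - pbar s|) ''
        {p ∈ stdSimplex ℝ (Fin S) | ∑ s, b s * p s ≤ β}) := ⟨p₀, hfeas, rfl⟩
  have hDmem : ((∑ s, b s * pbar s - β) * α₀ -
      ∑ s, pbar s * max 0 (b s * α₀ - (⨅ s', (b s' * α₀ + σ s')) - σ s)) ∈
      ((fun α : ℝ =>
          (∑ s, b s * pbar s - β) * α -
            ∑ s, pbar s * max 0 (b s * α - (⨅ s', (b s' * α + σ s')) - σ s)) ''
          Set.Ici (0:ℝ)) := ⟨α₀, hα₀0, rfl⟩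
  have hPge : ∀ x ∈ ((fun p : Fin S → ℝ => ∑ s, σ s * |p s - pbar s|) ''
        {p ∈ stdSimplex ℝ (Fin S) | ∑ s, b s * p s ≤ β}),
      ((∑ s, b s * pbar s - β) * α₀ -
        ∑ s, pbar s * max 0 (b s * α₀ - (⨅ s', (b s' * α₀ + σ s')) - σ s)) ≤ x := by
    rintro x ⟨q, ⟨⟨hq0, hq1⟩, hqβ⟩, rfl⟩
    exact weakDuality σ b pbar q hσ hpbar1 hpbar2 hq0 hq1 β α₀ hα₀0 hqβ
  have hDle : ∀ y ∈ ((fun α : ℝ =>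
          (∑ s, b s * pbar s - β) * α -
            ∑ s, pbar s * max 0 (b s * α - (⨅ s', (b s' * α + σ s')) - σ s)) ''
          Set.Ici (0:ℝ)),
      y ≤ ∑ s, σ s * |p₀ s - pbar s| := by
    rintro y ⟨α', hα', rfl⟩
    exact weakDuality σ b pbar p₀ hσ hpbar1 hpbar2 hp₀0 hp₀1 β α' hα' hp₀β
  have h1 : sInf ((fun p : Fin S → ℝ => ∑ s, σ s * |p s - pbar s|) ''
        {p ∈ stdSimplex ℝ (Fin S) | ∑ s, b s * p s ≤ β})
      = ∑ s, σ s * |p₀ s - pbar s| := by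
    apply le_antisymm
    · exact csInf_le ⟨_, hPge⟩ hPmem
    · apply le_csInf ⟨_, hPmem⟩
      intro x hx
      rw [heq]
      exact hPge x hx
  have h2 : sSup ((fun α : ℝ =>
          (∑ s, b s * pbar s - β) * α -
            ∑ s, pbar s * max 0 (b s * α - (⨅ s', (b s' * α + σ s')) - σ s)) ''
          Set.Ici (0:ℝ))
      = (∑ s, b s * pbar s - β) * α₀ -
          ∑ s, pbar s * max 0 (b s * α₀ - (⨅ s', (b s' * α₀ + σ s')) - σ s) := by
    apply le_antisymm
    · apply csSup_le ⟨_, hDmem⟩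
      intro y hy
      rw [← heq]
      exact hDle y hy
    · exact le_csSup ⟨_, hDle⟩ hDmem
  rw [h1, h2, heq]
end

section
/- Let S be a positive integer, σ ∈ ℝ^S with σ_s > 0 for all s, b ∈ ℝ^S with b_s ≥ 0 for all s, p̄ in the probability simplex Δ_S, and β ∈ ℝ with min_s b_s ≤ β < ⟨b, p̄⟩. Then (i) there exists (α, γ) ∈ ℝ² satisfying the system Σ_{s=1}^S σ_s^{-2} · max(−b_s α + γ + 2 σ_s² p̄_s, 0) = 2 and Σ_{s=1}^S b_s σ_s^{-2} · max(−b_s α + γ + 2 σ_s² p̄_s, 0) = 2β; and (ii) for every such solution (α, γ), the optimal value inf{ Σ_{s=1}^S σ_s² (p_s − p̄_s)² : p ∈ Δ_S, ⟨b, p⟩ ≤ β } equals −βα + γ + Σ_{s=1}^S p̄_s · min(b_s α − γ, 2 σ_s² p̄_s) − (1/4) Σ_{s=1}^S σ_s^{-2} · min(b_s α − γ, 2 σ_s² p̄_s)². -/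
open scoped BigOperators
open Finset

set_option maxHeartbeats 1000000 in

private theorem stmt5_aux₂ (S : ℕ) (hS : 0 < S)
    (σ : Fin S → ℝ) (hσ : ∀ s, 0 < σ s)
    (b : Fin S → ℝ) (hb : ∀ s, 0 ≤ b s)
    (pbar : Fin S → ℝ) (hpbar : pbar ∈ stdSimplex ℝ (Fin S))
    (β : ℝ) (hβ₂ : β < ∑ s, b s * pbar s)
    (α γ : ℝ)
    (h1 : ∑ s, (σ s ^ 2)⁻¹ * max (-(b s) * α + γ + 2 * σ s ^ 2 * pbar s) 0 = 2)
    (h2 : ∑ s, b s * (σ s ^ 2)⁻¹ * max (-(b s) * α + γ + 2 * σ s ^ 2 * pbar s) 0 = 2 * β) :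
    sInf ((fun p : Fin S → ℝ => ∑ s, σ s ^ 2 * (p s - pbar s) ^ 2) ''
        {p ∈ stdSimplex ℝ (Fin S) | ∑ s, b s * p s ≤ β})
      = -β * α + γ + (∑ s, pbar s * min (b s * α - γ) (2 * σ s ^ 2 * pbar s))
          - (1/4) * ∑ s, (σ s ^ 2)⁻¹ * (min (b s * α - γ) (2 * σ s ^ 2 * pbar s)) ^ 2 := by
  obtain ⟨hpbar0, hpbar1⟩ := hpbar
  have hσ2 : ∀ s, (0:ℝ) < σ s ^ 2 := fun s => pow_pos (hσ s) 2
  set m : Fin S → ℝ := fun s => min (b s * α - γ) (2 * σ s ^ 2 * pbar s) with hm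
  set p : Fin S → ℝ := fun s => pbar s - (σ s ^ 2)⁻¹ * m s / 2 with hp
  have hmA : ∀ s, m s ≤ b s * α - γ := fun s => min_le_left _ _
  have hmB : ∀ s, m s ≤ 2 * σ s ^ 2 * pbar s := fun s => min_le_right _ _
  have hmax : ∀ s, max (-(b s) * α + γ + 2 * σ s ^ 2 * pbar s) 0
      = 2 * σ s ^ 2 * pbar s - m s := by
    intro s
    simp only [hm]
    rcases le_total (b s * α - γ) (2 * σ s ^ 2 * pbar s) with h | h
    · rw [min_eq_left h, max_eq_left (by linarith)]; ring
    · rw [min_eq_right h, max_eq_right (by linarith)]; ring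
  have hpdef : ∀ s, p s = (σ s ^ 2)⁻¹ * max (-(b s) * α + γ + 2 * σ s ^ 2 * pbar s) 0 / 2 := by
    intro s
    have hne : σ s ^ 2 ≠ 0 := (hσ2 s).ne'
    have hws : (σ s ^ 2)⁻¹ * (σ s ^ 2) = 1 := inv_mul_cancel₀ hne
    simp only [hp, hmax s]
    linear_combination (- pbar s) * hws
  have hp0 : ∀ s, 0 ≤ p s := by
    intro s
    rw [hpdef s]
    positivity
  have hpsum : ∑ s, p s = 1 := by
    have e : ∑ s, p s * 2 = ∑ s, (σ s ^ 2)⁻¹ * max (-(b s) * α + γ + 2 * σ s ^ 2 * pbar s) 0 :=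
      Finset.sum_congr rfl fun s _ => by rw [hpdef s]; ring
    rw [← Finset.sum_mul, h1] at e
    linarith
  have hpb : ∑ s, b s * p s = β := by
    have e : ∑ s, (b s * p s) * 2
        = ∑ s, b s * (σ s ^ 2)⁻¹ * max (-(b s) * α + γ + 2 * σ s ^ 2 * pbar s) 0 :=
      Finset.sum_congr rfl fun s _ => by rw [hpdef s]; ring
    rw [← Finset.sum_mul, h2] at e
    linarith
  have hsupp : ∀ s, m s = b s * α - γ ∨ p s = 0 := by
    intro s
    rcases le_or_gt (b s * α - γ) (2 * σ s ^ 2 * pbar s) with h | h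
    · left; simp only [hm]; exact min_eq_left h
    · right
      rw [hpdef s, hmax s]
      simp only [hm]
      rw [min_eq_right h.le]
      ring
  have hmp : ∑ s, m s * p s = α * β - γ := by
    have e1 : ∀ s, m s * p s = (b s * α - γ) * p s := by
      intro s
      rcases hsupp s with h | h
      · rw [h]
      · rw [h]; ring
    calc ∑ s, m s * p s = ∑ s, (b s * α - γ) * p s := Finset.sum_congr rfl fun s _ => e1 s
      _ = α * (∑ s, b s * p s) - γ * (∑ s, p s) := by
          rw [Finset.mul_sum, Finset.mul_sum, ← Finset.sum_sub_distrib]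
          exact Finset.sum_congr rfl fun s _ => by ring
      _ = α * β - γ := by rw [hpb, hpsum]; ring
  have hfp : ∑ s, σ s ^ 2 * (p s - pbar s) ^ 2 = (1/4) * ∑ s, (σ s ^ 2)⁻¹ * m s ^ 2 := by
    rw [Finset.mul_sum]
    refine Finset.sum_congr rfl fun s _ => ?_
    have hne : σ s ^ 2 ≠ 0 := (hσ2 s).ne'
    have hws : (σ s ^ 2)⁻¹ * (σ s ^ 2) = 1 := inv_mul_cancel₀ hne
    simp only [hp]
    field_simp
    linear_combination (4 * m s ^ 2 * (σ s)⁻¹ ^ 2) * hws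
  have hpm : ∑ s, pbar s * m s = (α * β - γ) + (1/2) * ∑ s, (σ s ^ 2)⁻¹ * m s ^ 2 := by
    have e : ∀ s, pbar s * m s = m s * p s + (1/2) * ((σ s ^ 2)⁻¹ * m s ^ 2) := by
      intro s
      simp only [hp]
      ring
    rw [Finset.sum_congr rfl fun s _ => e s, Finset.sum_add_distrib, hmp, ← Finset.mul_sum]
  -- the goal in terms of m
  have hgoal : -β * α + γ + (∑ s, pbar s * m s) - (1/4) * ∑ s, (σ s ^ 2)⁻¹ * m s ^ 2
      = ∑ s, σ s ^ 2 * (p s - pbar s) ^ 2 := by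
    rw [hpm, hfp]; ring
  show sInf _ = -β * α + γ + (∑ s, pbar s * m s) - (1/4) * ∑ s, (σ s ^ 2)⁻¹ * m s ^ 2
  rw [hgoal]
  -- p is a least element
  -- lower bound on the slice {⟨b,q⟩ = β}
  have hslice : ∀ q : Fin S → ℝ, (∀ s, 0 ≤ q s) → ∑ s, q s = 1 → ∑ s, b s * q s = β →
      ∑ s, σ s ^ 2 * (p s - pbar s) ^ 2 ≤ ∑ s, σ s ^ 2 * (q s - pbar s) ^ 2 := by
    intro q hq0 hq1 hqb
    have point : ∀ s ∈ univ, σ s ^ 2 * (p s - pbar s) ^ 2 + (-(b s * α - γ)) * (q s - p s)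
        ≤ σ s ^ 2 * (q s - pbar s) ^ 2 := by
      intro s _
      have hps : 2 * σ s ^ 2 * (p s - pbar s) = - m s := by
        have hws : (σ s ^ 2)⁻¹ * (σ s ^ 2) = 1 := inv_mul_cancel₀ (hσ2 s).ne'
        simp only [hp]
        linear_combination (- m s) * hws
      have e : σ s ^ 2 * (q s - pbar s) ^ 2
          = σ s ^ 2 * (p s - pbar s) ^ 2 + (- m s) * (q s - p s) + σ s ^ 2 * (q s - p s) ^ 2 := by
        linear_combination (q s - p s) * hps
      have hnn : 0 ≤ (b s * α - γ - m s) * (q s - p s) := by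
        rcases hsupp s with h | h
        · have h0 : b s * α - γ - m s = 0 := by rw [h]; ring
          rw [h0, zero_mul]
        · have hqp : 0 ≤ q s - p s := by rw [h, sub_zero]; exact hq0 s
          exact mul_nonneg (sub_nonneg.2 (hmA s)) hqp
      nlinarith [e, hnn, mul_nonneg (hσ2 s).le (sq_nonneg (q s - p s))]
    have hsum := Finset.sum_le_sum point
    rw [Finset.sum_add_distrib] at hsum
    have e : ∑ s, (-(b s * α - γ)) * (q s - p s) = 0 := by
      have : ∑ s, (-(b s * α - γ)) * (q s - p s)
          = -α * (∑ s, b s * q s) + γ * (∑ s, q s) + α * (∑ s, b s * p s) - γ * (∑ s, p s) := by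
        rw [Finset.mul_sum, Finset.mul_sum, Finset.mul_sum, Finset.mul_sum]
        rw [← Finset.sum_add_distrib, ← Finset.sum_add_distrib, ← Finset.sum_sub_distrib]
        exact Finset.sum_congr rfl fun s _ => by ring
      rw [this, hqb, hq1, hpb, hpsum]; ring
    rw [e] at hsum
    linarith [hsum]
  -- lower bound over the whole feasible set
  have hlow : ∀ q : Fin S → ℝ, (∀ s, 0 ≤ q s) → ∑ s, q s = 1 → ∑ s, b s * q s ≤ β →
      ∑ s, σ s ^ 2 * (p s - pbar s) ^ 2 ≤ ∑ s, σ s ^ 2 * (q s - pbar s) ^ 2 := by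
    intro q hq0 hq1 hqb
    set c : ℝ := ∑ s, b s * q s with hc
    have hcD : c < ∑ s, b s * pbar s := lt_of_le_of_lt hqb hβ₂
    set t : ℝ := (β - c) / ((∑ s, b s * pbar s) - c) with ht
    have hden : (0:ℝ) < (∑ s, b s * pbar s) - c := by linarith
    have ht0 : 0 ≤ t := div_nonneg (by linarith) hden.le
    have ht1 : t ≤ 1 := by
      rw [ht, div_le_one hden]
      linarith
    set q' : Fin S → ℝ := fun s => q s + t * (pbar s - q s) with hq'
    have hq'0 : ∀ s, 0 ≤ q' s := by
      intro s
      simp only [hq']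
      have : q s + t * (pbar s - q s) = (1 - t) * q s + t * pbar s := by ring
      rw [this]
      have := hq0 s
      have := hpbar0 s
      nlinarith
    have hq'1 : ∑ s, q' s = 1 := by
      simp only [hq']
      rw [Finset.sum_add_distrib, ← Finset.mul_sum, Finset.sum_sub_distrib, hq1, hpbar1]
      ring
    have hq'b : ∑ s, b s * q' s = β := by
      have e : ∑ s, b s * q' s = c + t * ((∑ s, b s * pbar s) - c) := by
        calc ∑ s, b s * q' s
            = ∑ s, (b s * q s + (t * (b s * pbar s) - t * (b s * q s))) :=
              Finset.sum_congr rfl fun s _ => by simp only [hq']; ring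
          _ = (∑ s, b s * q s) + ((∑ s, t * (b s * pbar s)) - (∑ s, t * (b s * q s))) := by
              rw [Finset.sum_add_distrib, Finset.sum_sub_distrib]
          _ = c + t * ((∑ s, b s * pbar s) - c) := by
              rw [← Finset.mul_sum, ← Finset.mul_sum, ← hc]; ring
      rw [e, ht, div_mul_cancel₀ _ hden.ne']
      ring
    have hq'f : ∑ s, σ s ^ 2 * (q' s - pbar s) ^ 2
        = (1 - t)^2 * ∑ s, σ s ^ 2 * (q s - pbar s) ^ 2 := by
      rw [Finset.mul_sum]
      refine Finset.sum_congr rfl fun s _ => ?_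
      simp only [hq']
      ring
    have h1' := hslice q' hq'0 hq'1 hq'b
    have hfq : 0 ≤ ∑ s, σ s ^ 2 * (q s - pbar s) ^ 2 :=
      Finset.sum_nonneg fun s _ => by positivity
    have hsq : (1 - t)^2 ≤ 1 := by nlinarith
    have : (1 - t)^2 * (∑ s, σ s ^ 2 * (q s - pbar s) ^ 2)
        ≤ ∑ s, σ s ^ 2 * (q s - pbar s) ^ 2 := by
      calc (1 - t)^2 * (∑ s, σ s ^ 2 * (q s - pbar s) ^ 2)
          ≤ 1 * (∑ s, σ s ^ 2 * (q s - pbar s) ^ 2) :=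
            mul_le_mul_of_nonneg_right hsq hfq
        _ = ∑ s, σ s ^ 2 * (q s - pbar s) ^ 2 := one_mul _
    calc ∑ s, σ s ^ 2 * (p s - pbar s) ^ 2 ≤ ∑ s, σ s ^ 2 * (q' s - pbar s) ^ 2 := h1'
      _ = (1 - t)^2 * ∑ s, σ s ^ 2 * (q s - pbar s) ^ 2 := hq'f
      _ ≤ ∑ s, σ s ^ 2 * (q s - pbar s) ^ 2 := this
  refine IsLeast.csInf_eq ⟨⟨p, Set.mem_sep_iff.2 ⟨⟨hp0, hpsum⟩, le_of_eq hpb⟩, rfl⟩, ?_⟩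
  rintro x ⟨q, hq, rfl⟩
  obtain ⟨⟨hq0, hq1⟩, hqb⟩ := Set.mem_sep_iff.1 hq
  exact hlow q hq0 hq1 hqb


set_option maxHeartbeats 1000000 in
private theorem stmt5_aux₁ (S : ℕ) (hS : 0 < S)
    (σ : Fin S → ℝ) (hσ : ∀ s, 0 < σ s)
    (b : Fin S → ℝ) (hb : ∀ s, 0 ≤ b s)
    (pbar : Fin S → ℝ) (hpbar : pbar ∈ stdSimplex ℝ (Fin S))
    (β : ℝ) (hβ₁ : (⨅ s, b s) ≤ β) (hβ₂ : β < ∑ s, b s * pbar s) :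
    ∃ α γ : ℝ,
        (∑ s, (σ s ^ 2)⁻¹ * max (-(b s) * α + γ + 2 * σ s ^ 2 * pbar s) 0 = 2) ∧
        (∑ s, b s * (σ s ^ 2)⁻¹ * max (-(b s) * α + γ + 2 * σ s ^ 2 * pbar s) 0 = 2 * β) := by
  obtain ⟨hpbar0, hpbar1⟩ := hpbar
  haveI : Nonempty (Fin S) := ⟨⟨0, hS⟩⟩
  have hne : (univ : Finset (Fin S)).Nonempty := univ_nonempty
  have hσ2 : ∀ s, (0:ℝ) < σ s ^ 2 := fun s => pow_pos (hσ s) 2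
  have hw : ∀ s, (0:ℝ) < (σ s ^ 2)⁻¹ := fun s => inv_pos.2 (hσ2 s)
  have hwB : ∀ s, (σ s ^ 2)⁻¹ * (2 * σ s ^ 2 * pbar s) = 2 * pbar s := by
    intro s
    rw [show 2 * σ s ^ 2 * pbar s = σ s ^ 2 * (2 * pbar s) from by ring,
      inv_mul_cancel_left₀ (hσ2 s).ne']
  have hB0 : ∀ s, 0 ≤ 2 * σ s ^ 2 * pbar s :=
    fun s => mul_nonneg (by positivity) (hpbar0 s)
  set F : ℝ → ℝ → ℝ :=
    fun α γ => ∑ s, (σ s ^ 2)⁻¹ * max (-(b s) * α + γ + 2 * σ s ^ 2 * pbar s) 0 with hF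
  set H : ℝ → ℝ → ℝ :=
    fun α γ => ∑ s, b s * (σ s ^ 2)⁻¹ * max (-(b s) * α + γ + 2 * σ s ^ 2 * pbar s) 0 with hHdef
  -- positivity constants
  set c : ℝ := univ.inf' hne (fun s => (σ s ^ 2)⁻¹) with hcdef
  have hc : 0 < c := (Finset.lt_inf'_iff hne).2 fun s _ => hw s
  have hcle : ∀ s, c ≤ (σ s ^ 2)⁻¹ := fun s => Finset.inf'_le _ (mem_univ s)
  set L : ℝ := ∑ s, (σ s ^ 2)⁻¹ * b s with hLdef
  have hL0 : 0 ≤ L := Finset.sum_nonneg fun s _ => mul_nonneg (hw s).le (hb s)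
  -- Lipschitz in α
  have hLipα : ∀ α α' γ, |F α γ - F α' γ| ≤ L * |α - α'| := by
    intro α α' γ
    rw [hF]
    simp only
    rw [← Finset.sum_sub_distrib]
    calc |∑ s, ((σ s ^ 2)⁻¹ * max (-(b s) * α + γ + 2 * σ s ^ 2 * pbar s) 0
            - (σ s ^ 2)⁻¹ * max (-(b s) * α' + γ + 2 * σ s ^ 2 * pbar s) 0)|
        ≤ ∑ s, |(σ s ^ 2)⁻¹ * max (-(b s) * α + γ + 2 * σ s ^ 2 * pbar s) 0
            - (σ s ^ 2)⁻¹ * max (-(b s) * α' + γ + 2 * σ s ^ 2 * pbar s) 0| :=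
          Finset.abs_sum_le_sum_abs _ _
      _ ≤ ∑ s, (σ s ^ 2)⁻¹ * b s * |α - α'| := by
          refine Finset.sum_le_sum fun s _ => ?_
          rw [← mul_sub, abs_mul, abs_of_pos (hw s)]
          have h1 : |max (-(b s) * α + γ + 2 * σ s ^ 2 * pbar s) 0
              - max (-(b s) * α' + γ + 2 * σ s ^ 2 * pbar s) 0|
              ≤ |(-(b s) * α + γ + 2 * σ s ^ 2 * pbar s)
                - (-(b s) * α' + γ + 2 * σ s ^ 2 * pbar s)| :=
            abs_max_sub_max_le_abs _ _ _
          have h2 : |(-(b s) * α + γ + 2 * σ s ^ 2 * pbar s)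
              - (-(b s) * α' + γ + 2 * σ s ^ 2 * pbar s)| = b s * |α - α'| := by
            rw [show (-(b s) * α + γ + 2 * σ s ^ 2 * pbar s)
                - (-(b s) * α' + γ + 2 * σ s ^ 2 * pbar s) = -(b s * (α - α')) from by ring]
            rw [abs_neg, abs_mul, abs_of_nonneg (hb s)]
          calc (σ s ^ 2)⁻¹ * |max (-(b s) * α + γ + 2 * σ s ^ 2 * pbar s) 0
              - max (-(b s) * α' + γ + 2 * σ s ^ 2 * pbar s) 0|
              ≤ (σ s ^ 2)⁻¹ * (b s * |α - α'|) :=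
                mul_le_mul_of_nonneg_left (h1.trans (le_of_eq h2)) (hw s).le
            _ = (σ s ^ 2)⁻¹ * b s * |α - α'| := by ring
      _ = L * |α - α'| := by rw [hLdef, Finset.sum_mul]
  -- slope lower bound in γ
  have hslope : ∀ α γ t, 0 ≤ t → 2 ≤ F α γ → F α γ + c * t ≤ F α (γ + t) := by
    intro α γ t ht hFγ
    -- some term is positive
    have hpos : ∃ s0, 0 < (σ s0 ^ 2)⁻¹ * max (-(b s0) * α + γ + 2 * σ s0 ^ 2 * pbar s0) 0 := by
      by_contra hcon
      push_neg at hcon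
      have : F α γ ≤ 0 := Finset.sum_nonpos fun s _ => hcon s
      linarith
    obtain ⟨s0, hs0⟩ := hpos
    have hE0 : 0 < -(b s0) * α + γ + 2 * σ s0 ^ 2 * pbar s0 := by
      by_contra hcon
      push_neg at hcon
      rw [max_eq_right hcon, mul_zero] at hs0
      exact lt_irrefl 0 hs0
    have hshift : ∀ s, -(b s) * α + (γ + t) + 2 * σ s ^ 2 * pbar s
        = (-(b s) * α + γ + 2 * σ s ^ 2 * pbar s) + t := fun s => by ring
    have expand : F α (γ + t)
        = ∑ s, (σ s ^ 2)⁻¹ * max ((-(b s) * α + γ + 2 * σ s ^ 2 * pbar s) + t) 0 := by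
      rw [hF]
      exact Finset.sum_congr rfl fun s _ => by rw [hshift s]
    rw [expand, hF]
    simp only
    rw [← Finset.add_sum_erase _ _ (mem_univ s0),
        ← Finset.add_sum_erase _ (fun s => (σ s ^ 2)⁻¹ *
          max ((-(b s) * α + γ + 2 * σ s ^ 2 * pbar s) + t) 0) (mem_univ s0)]
    have hterm : (σ s0 ^ 2)⁻¹ * max (-(b s0) * α + γ + 2 * σ s0 ^ 2 * pbar s0) 0 + c * t
        ≤ (σ s0 ^ 2)⁻¹ * max ((-(b s0) * α + γ + 2 * σ s0 ^ 2 * pbar s0) + t) 0 := by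
      rw [max_eq_left hE0.le, max_eq_left (by linarith)]
      have : c * t ≤ (σ s0 ^ 2)⁻¹ * t := mul_le_mul_of_nonneg_right (hcle s0) ht
      linarith [this]
    have hrest : ∑ s ∈ univ.erase s0, (σ s ^ 2)⁻¹ * max (-(b s) * α + γ + 2 * σ s ^ 2 * pbar s) 0
        ≤ ∑ s ∈ univ.erase s0,
            (σ s ^ 2)⁻¹ * max ((-(b s) * α + γ + 2 * σ s ^ 2 * pbar s) + t) 0 := by
      refine Finset.sum_le_sum fun s _ => ?_
      exact mul_le_mul_of_nonneg_left (max_le_max (by linarith) le_rfl) (hw s).le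
    linarith
  -- gamma function
  set gam : ℝ → ℝ := fun α => sInf {γ | 2 ≤ F α γ} with hgam
  have hset_ne : ∀ α, {γ | 2 ≤ F α γ}.Nonempty := by
    intro α
    obtain ⟨s1⟩ := ‹Nonempty (Fin S)›
    refine ⟨b s1 * α + 2 * σ s1 ^ 2, ?_⟩
    have hterm : 2 ≤ (σ s1 ^ 2)⁻¹ *
        max (-(b s1) * α + (b s1 * α + 2 * σ s1 ^ 2) + 2 * σ s1 ^ 2 * pbar s1) 0 := by
      have harg : -(b s1) * α + (b s1 * α + 2 * σ s1 ^ 2) + 2 * σ s1 ^ 2 * pbar s1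
          = 2 * σ s1 ^ 2 + 2 * σ s1 ^ 2 * pbar s1 := by ring
      rw [harg, max_eq_left (add_nonneg (by positivity) (hB0 s1))]
      rw [show 2 * σ s1 ^ 2 + 2 * σ s1 ^ 2 * pbar s1
          = σ s1 ^ 2 * (2 + 2 * pbar s1) from by ring,
        inv_mul_cancel_left₀ (hσ2 s1).ne']
      linarith [hpbar0 s1]
    calc (2:ℝ) ≤ _ := hterm
      _ ≤ F α (b s1 * α + 2 * σ s1 ^ 2) := by
          show _ ≤ ∑ s, (σ s ^ 2)⁻¹ *
            max (-(b s) * α + (b s1 * α + 2 * σ s1 ^ 2) + 2 * σ s ^ 2 * pbar s) 0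
          exact Finset.single_le_sum
            (f := fun s => (σ s ^ 2)⁻¹ *
              max (-(b s) * α + (b s1 * α + 2 * σ s1 ^ 2) + 2 * σ s ^ 2 * pbar s) 0)
            (fun s _ => mul_nonneg (hw s).le (le_max_right _ _)) (mem_univ s1)
  have hset_bdd : ∀ α, BddBelow {γ | 2 ≤ F α γ} := by
    intro α
    refine ⟨univ.inf' hne (fun s => b s * α - 2 * σ s ^ 2 * pbar s), fun γ hγ => ?_⟩
    have hpos : ∃ s0, 0 < (σ s0 ^ 2)⁻¹ * max (-(b s0) * α + γ + 2 * σ s0 ^ 2 * pbar s0) 0 := by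
      by_contra hcon
      push_neg at hcon
      have : F α γ ≤ 0 := Finset.sum_nonpos fun s _ => hcon s
      have := Set.mem_setOf_eq ▸ hγ
      linarith
    obtain ⟨s0, hs0⟩ := hpos
    have hE0 : 0 < -(b s0) * α + γ + 2 * σ s0 ^ 2 * pbar s0 := by
      by_contra hcon
      push_neg at hcon
      rw [max_eq_right hcon, mul_zero] at hs0
      exact lt_irrefl 0 hs0
    calc univ.inf' hne (fun s => b s * α - 2 * σ s ^ 2 * pbar s)
        ≤ b s0 * α - 2 * σ s0 ^ 2 * pbar s0 := Finset.inf'_le _ (mem_univ s0)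
      _ ≤ γ := by linarith
  have hWpos : (0:ℝ) < ∑ s, (σ s ^ 2)⁻¹ := Finset.sum_pos (fun s _ => hw s) hne
  have hLipγ : ∀ α γ γ', |F α γ - F α γ'| ≤ (∑ s, (σ s ^ 2)⁻¹) * |γ - γ'| := by
    intro α γ γ'
    rw [hF]
    simp only
    rw [← Finset.sum_sub_distrib]
    calc |∑ s, ((σ s ^ 2)⁻¹ * max (-(b s) * α + γ + 2 * σ s ^ 2 * pbar s) 0
            - (σ s ^ 2)⁻¹ * max (-(b s) * α + γ' + 2 * σ s ^ 2 * pbar s) 0)|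
        ≤ ∑ s, |(σ s ^ 2)⁻¹ * max (-(b s) * α + γ + 2 * σ s ^ 2 * pbar s) 0
            - (σ s ^ 2)⁻¹ * max (-(b s) * α + γ' + 2 * σ s ^ 2 * pbar s) 0| :=
          Finset.abs_sum_le_sum_abs _ _
      _ ≤ ∑ s, (σ s ^ 2)⁻¹ * |γ - γ'| := by
          refine Finset.sum_le_sum fun s _ => ?_
          rw [← mul_sub, abs_mul, abs_of_pos (hw s)]
          refine mul_le_mul_of_nonneg_left ?_ (hw s).le
          refine (abs_max_sub_max_le_abs _ _ _).trans (le_of_eq ?_)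
          congr 1
          ring
      _ = (∑ s, (σ s ^ 2)⁻¹) * |γ - γ'| := by rw [Finset.sum_mul]
  -- gam α is in the set and F α (gam α) = 2
  have hgam_mem : ∀ α, 2 ≤ F α (gam α) := by
    intro α
    have hclosed : IsClosed {γ | 2 ≤ F α γ} := by
      have hFc : Continuous (F α) := by
        rw [hF]
        apply continuous_finset_sum
        intro s _
        exact continuous_const.mul
          (((continuous_const.add continuous_id).add continuous_const).max continuous_const)
      exact isClosed_le continuous_const hFc
    exact hclosed.csInf_mem (hset_ne α) (hset_bdd α)
  have hgam_eq : ∀ α, F α (gam α) = 2 := by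
    intro α
    by_contra hne2
    have hgt : 2 < F α (gam α) := lt_of_le_of_ne (hgam_mem α) (Ne.symm hne2)
    set t : ℝ := (F α (gam α) - 2) / (2 * ∑ s, (σ s ^ 2)⁻¹) with htdef
    have ht : 0 < t := div_pos (by linarith) (by linarith)
    have hmem : 2 ≤ F α (gam α - t) := by
      have h1 : |F α (gam α) - F α (gam α - t)| ≤ (∑ s, (σ s ^ 2)⁻¹) * |gam α - (gam α - t)| :=
        hLipγ α (gam α) (gam α - t)
      have h2 : |gam α - (gam α - t)| = t := by
        rw [show gam α - (gam α - t) = t from by ring, abs_of_pos ht]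
      rw [h2] at h1
      have he : t * (2 * ∑ s, (σ s ^ 2)⁻¹) = F α (gam α) - 2 := by
        rw [htdef]
        exact div_mul_cancel₀ _ (by linarith)
      have h3 : (∑ s, (σ s ^ 2)⁻¹) * t = (F α (gam α) - 2) / 2 := by
        linear_combination he / 2
      have h4 := abs_le.1 h1
      linarith [h4.1, h4.2]
    have : gam α ≤ gam α - t := csInf_le (hset_bdd α) hmem
    linarith
  -- Lipschitz bound for gam
  have hgamLip1 : ∀ α α', gam α' ≤ gam α + (L / c) * |α' - α| := by
    intro α α'
    have hKnn : 0 ≤ (L / c) * |α' - α| :=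
      mul_nonneg (div_nonneg hL0 hc.le) (abs_nonneg _)
    have hmem : 2 ≤ F α' (gam α + (L / c) * |α' - α|) := by
      have h1 : F α (gam α) + c * ((L / c) * |α' - α|)
          ≤ F α (gam α + (L / c) * |α' - α|) := hslope α (gam α) _ hKnn (hgam_mem α)
      have h2 : |F α (gam α + (L / c) * |α' - α|) - F α' (gam α + (L / c) * |α' - α|)|
          ≤ L * |α - α'| := hLipα α α' _
      have h3 : c * ((L / c) * |α' - α|) = L * |α - α'| := by
        rw [abs_sub_comm α' α]
        field_simp
      have h4 := (abs_le.1 h2).2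
      rw [hgam_eq α] at h1
      linarith [h1, h4, h3.ge, h3.le]
    exact csInf_le (hset_bdd α') hmem
  have hgamcont : Continuous gam := by
    have hlip : LipschitzWith (Real.toNNReal (L / c)) gam := by
      refine LipschitzWith.of_dist_le_mul fun x y => ?_
      rw [Real.dist_eq, Real.dist_eq, Real.coe_toNNReal _ (div_nonneg hL0 hc.le)]
      rw [abs_le]
      constructor
      · have := hgamLip1 x y
        rw [abs_sub_comm y x] at this
        linarith
      · have := hgamLip1 y x
        linarith
    exact hlip.continuous
  -- h function and its continuity
  set h : ℝ → ℝ := fun α => H α (gam α) with hh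
  have hHc : Continuous fun x : ℝ × ℝ => H x.1 x.2 := by
    rw [hHdef]
    apply continuous_finset_sum
    intro s _
    exact continuous_const.mul
      ((((continuous_const.mul continuous_fst).add continuous_snd).add continuous_const).max
        continuous_const)
  have hhc : Continuous h := hHc.comp (continuous_id.prodMk hgamcont)
  -- value at 0
  have hF00 : F 0 0 = 2 := by
    rw [hF]
    simp only
    have e : ∀ s ∈ univ, (σ s ^ 2)⁻¹ * max (-(b s) * 0 + 0 + 2 * σ s ^ 2 * pbar s) 0
        = 2 * pbar s := by
      intro s _
      rw [show -(b s) * 0 + 0 + 2 * σ s ^ 2 * pbar s = 2 * σ s ^ 2 * pbar s from by ring]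
      rw [max_eq_left (hB0 s), hwB s]
    rw [Finset.sum_congr rfl e, ← Finset.mul_sum, hpbar1, mul_one]
  have hgam0 : gam 0 = 0 := by
    have hmem0 : (0:ℝ) ∈ {γ | 2 ≤ F 0 γ} := by
      simp only [Set.mem_setOf_eq, hF00, le_refl]
    refine le_antisymm (csInf_le (hset_bdd 0) hmem0) ?_
    refine le_csInf (hset_ne 0) fun γ hγ => ?_
    by_contra hneg
    push_neg at hneg
    -- show F 0 γ < 2 for γ < 0
    obtain ⟨sstar, -, hstar⟩ : ∃ s ∈ univ, 0 < pbar s := by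
      by_contra hcon
      push_neg at hcon
      have : ∑ s, pbar s ≤ 0 := Finset.sum_nonpos fun s hs => (hcon s hs)
      linarith [hpbar1]
    have hlt : F 0 γ < 2 := by
      rw [hF]
      simp only
      calc ∑ s, (σ s ^ 2)⁻¹ * max (-(b s) * 0 + γ + 2 * σ s ^ 2 * pbar s) 0
          < ∑ s, 2 * pbar s := by
            refine Finset.sum_lt_sum (fun s _ => ?_) ⟨sstar, mem_univ sstar, ?_⟩
            · rw [← hwB s]
              refine mul_le_mul_of_nonneg_left ?_ (hw s).le
              exact max_le (by linarith [hB0 s]) (hB0 s)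
            · rw [← hwB sstar]
              refine mul_lt_mul_of_pos_left ?_ (hw sstar)
              have hBpos : 0 < 2 * σ sstar ^ 2 * pbar sstar := by
                have := hσ2 sstar
                nlinarith
              exact max_lt (by linarith) hBpos
        _ = 2 := by rw [← Finset.mul_sum, hpbar1, mul_one]
    have := Set.mem_setOf_eq ▸ hγ
    linarith
  have hh0 : h 0 = 2 * ∑ s, b s * pbar s := by
    rw [hh]
    simp only
    rw [hgam0, hHdef]
    simp only
    have e : ∀ s ∈ univ, b s * (σ s ^ 2)⁻¹ * max (-(b s) * 0 + 0 + 2 * σ s ^ 2 * pbar s) 0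
        = 2 * (b s * pbar s) := by
      intro s _
      rw [show -(b s) * 0 + 0 + 2 * σ s ^ 2 * pbar s = 2 * σ s ^ 2 * pbar s from by ring]
      rw [max_eq_left (hB0 s), mul_assoc, hwB s]
      ring
    rw [Finset.sum_congr rfl e, ← Finset.mul_sum]
  -- the min of b
  have hbdd : BddBelow (Set.range b) := ⟨0, fun y ⟨s, hs⟩ => hs ▸ hb s⟩
  set mb : ℝ := ⨅ s, b s with hmb
  have hmble : ∀ s, mb ≤ b s := fun s => ciInf_le hbdd s
  obtain ⟨sstar, hsstar⟩ : ∃ s, ∀ t, b s ≤ b t := Finite.exists_min b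
  have hmbeq : mb = b sstar := le_antisymm (hmble sstar) (le_ciInf hsstar)
  -- upper bound for gam
  set C : ℝ := 2 * σ sstar ^ 2 with hC
  have hCpos : 0 < C := by rw [hC]; nlinarith [hσ2 sstar]
  have hgamub : ∀ α, gam α ≤ mb * α + C := by
    intro α
    refine csInf_le (hset_bdd α) ?_
    show 2 ≤ F α (mb * α + C)
    have hterm : 2 ≤ (σ sstar ^ 2)⁻¹ *
        max (-(b sstar) * α + (mb * α + C) + 2 * σ sstar ^ 2 * pbar sstar) 0 := by
      have harg : -(b sstar) * α + (mb * α + C) + 2 * σ sstar ^ 2 * pbar sstar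
          = C + 2 * σ sstar ^ 2 * pbar sstar := by rw [hmbeq]; ring
      rw [harg, max_eq_left (add_nonneg hCpos.le (hB0 sstar))]
      rw [hC, show 2 * σ sstar ^ 2 + 2 * σ sstar ^ 2 * pbar sstar
          = σ sstar ^ 2 * (2 + 2 * pbar sstar) from by ring,
        inv_mul_cancel_left₀ (hσ2 sstar).ne']
      linarith [hpbar0 sstar]
    calc (2:ℝ) ≤ _ := hterm
      _ ≤ F α (mb * α + C) := by
          show _ ≤ ∑ s, (σ s ^ 2)⁻¹ *
            max (-(b s) * α + (mb * α + C) + 2 * σ s ^ 2 * pbar s) 0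
          exact Finset.single_le_sum
            (f := fun s => (σ s ^ 2)⁻¹ *
              max (-(b s) * α + (mb * α + C) + 2 * σ s ^ 2 * pbar s) 0)
            (fun s _ => mul_nonneg (hw s).le (le_max_right _ _)) (mem_univ sstar)
  -- choice of A
  set A : ℝ := max 0 (univ.sup' hne
    (fun s => if mb < b s then (C + 2 * σ s ^ 2 * pbar s) / (b s - mb) else 0)) with hA
  have hA0 : 0 ≤ A := le_max_left _ _
  have hAge : ∀ s, mb < b s → (C + 2 * σ s ^ 2 * pbar s) / (b s - mb) ≤ A := by
    intro s hs
    calc (C + 2 * σ s ^ 2 * pbar s) / (b s - mb)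
        = (if mb < b s then (C + 2 * σ s ^ 2 * pbar s) / (b s - mb) else 0) := by
          rw [if_pos hs]
      _ ≤ univ.sup' hne
            (fun s => if mb < b s then (C + 2 * σ s ^ 2 * pbar s) / (b s - mb) else 0) :=
          Finset.le_sup'
            (fun s => if mb < b s then (C + 2 * σ s ^ 2 * pbar s) / (b s - mb) else 0)
            (mem_univ s)
      _ ≤ A := le_max_right _ _
  -- vanishing of terms with b s > mb at α = A
  have hvanish : ∀ s, mb < b s →
      max (-(b s) * A + gam A + 2 * σ s ^ 2 * pbar s) 0 = 0 := by
    intro s hs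
    refine max_eq_right ?_
    have h1 : gam A ≤ mb * A + C := hgamub A
    have hgt : 0 < b s - mb := by linarith
    have h2 : C + 2 * σ s ^ 2 * pbar s ≤ A * (b s - mb) := by
      rw [← div_le_iff₀ hgt]
      exact hAge s hs
    nlinarith
  have hhA : h A = 2 * mb := by
    rw [hh]
    simp only
    rw [hHdef]
    simp only
    have e : ∀ s ∈ univ, b s * (σ s ^ 2)⁻¹ * max (-(b s) * A + gam A + 2 * σ s ^ 2 * pbar s) 0
        = mb * ((σ s ^ 2)⁻¹ * max (-(b s) * A + gam A + 2 * σ s ^ 2 * pbar s) 0) := by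
      intro s _
      rcases eq_or_lt_of_le (hmble s) with heq | hlt
      · rw [← heq]; ring
      · rw [hvanish s hlt]
        ring
    rw [Finset.sum_congr rfl e, ← Finset.mul_sum]
    have : ∑ s, (σ s ^ 2)⁻¹ * max (-(b s) * A + gam A + 2 * σ s ^ 2 * pbar s) 0 = 2 :=
      hgam_eq A
    rw [this]
    ring
  -- intermediate value theorem
  have hmemIcc : 2 * β ∈ Set.Icc (h A) (h 0) := by
    constructor
    · rw [hhA]; linarith [hβ₁]
    · rw [hh0]; linarith [hβ₂]
  obtain ⟨α, -, hα⟩ := intermediate_value_Icc' hA0 hhc.continuousOn hmemIcc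
  exact ⟨α, gam α, hgam_eq α, hα⟩

/-- The weighted 2-norm projection problem: the KKT system of two nonlinear
equations is solvable, and every solution `(α, γ)` of the system yields the
optimal value of the projection problem via an explicit formula. -/
theorem stmt5 (S : ℕ) (hS : 0 < S)
    (σ : Fin S → ℝ) (hσ : ∀ s, 0 < σ s)
    (b : Fin S → ℝ) (hb : ∀ s, 0 ≤ b s)
    (pbar : Fin S → ℝ) (hpbar : pbar ∈ stdSimplex ℝ (Fin S))
    (β : ℝ) (hβ₁ : (⨅ s, b s) ≤ β) (hβ₂ : β < ∑ s, b s * pbar s) :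
    (∃ α γ : ℝ,
        (∑ s, (σ s ^ 2)⁻¹ * max (-(b s) * α + γ + 2 * σ s ^ 2 * pbar s) 0 = 2) ∧
        (∑ s, b s * (σ s ^ 2)⁻¹ * max (-(b s) * α + γ + 2 * σ s ^ 2 * pbar s) 0 = 2 * β)) ∧
    (∀ α γ : ℝ,
        (∑ s, (σ s ^ 2)⁻¹ * max (-(b s) * α + γ + 2 * σ s ^ 2 * pbar s) 0 = 2) →
        (∑ s, b s * (σ s ^ 2)⁻¹ * max (-(b s) * α + γ + 2 * σ s ^ 2 * pbar s) 0 = 2 * β) →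
        sInf ((fun p : Fin S → ℝ => ∑ s, σ s ^ 2 * (p s - pbar s) ^ 2) ''
            {p ∈ stdSimplex ℝ (Fin S) | ∑ s, b s * p s ≤ β})
          = -β * α + γ + (∑ s, pbar s * min (b s * α - γ) (2 * σ s ^ 2 * pbar s))
              - (1/4) * ∑ s, (σ s ^ 2)⁻¹ * (min (b s * α - γ) (2 * σ s ^ 2 * pbar s)) ^ 2) := by
  exact ⟨stmt5_aux₁ S hS σ hσ b hb pbar hpbar β hβ₁ hβ₂,
    fun α γ h1 h2 => stmt5_aux₂ S hS σ hσ b hb pbar hpbar β hβ₂ α γ h1 h2⟩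
end

section
/- Let S be a positive integer, a ∈ ℝ^S with a_s > 0 for all s, b, c ∈ ℝ^S, and ρ > 0. Then for every α ∈ ℝ there exists a unique γ ∈ ℝ such that Σ_{s=1}^S a_s · max(−b_s α + γ + c_s, 0) = ρ. -/
/-!
The map `γ ↦ ∑ s, a s * max (γ + d s) 0` is continuous, vanishes for very negative `γ`
and exceeds any level for large `γ`, so the intermediate value theorem gives a solution.
Wherever it is positive some term `γ + d s` is positive, and that term makes it strictly
increasing there, so a positive level is attained at most once.
-/

open Finset

section PosPartSum

variable {ι : Type*} [Fintype ι]

noncomputable def posPartSum (a d : ι → ℝ) (γ : ℝ) : ℝ :=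
  ∑ s, a s * max (γ + d s) 0

variable {a d : ι → ℝ}

theorem continuous_posPartSum : Continuous (posPartSum a d) := by
  unfold posPartSum
  fun_prop

theorem posPartSum_eq_zero {γ : ℝ} (h : ∀ s, γ + d s ≤ 0) : posPartSum a d γ = 0 :=
  sum_eq_zero fun s _ => by rw [max_eq_right (h s), mul_zero]

theorem mul_le_posPartSum (ha : ∀ s, 0 ≤ a s) (γ : ℝ) (s : ι) :
    a s * (γ + d s) ≤ posPartSum a d γ :=
  calc a s * (γ + d s) ≤ a s * max (γ + d s) 0 :=
        mul_le_mul_of_nonneg_left (le_max_left _ _) (ha s)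
    _ ≤ posPartSum a d γ :=
        single_le_sum (f := fun s => a s * max (γ + d s) 0)
          (fun s _ => mul_nonneg (ha s) (le_max_right _ _)) (mem_univ s)

theorem strictMonoOn_posPartSum (ha : ∀ s, 0 < a s) :
    StrictMonoOn (posPartSum a d) {γ | 0 < posPartSum a d γ} := by
  intro γ₁ hγ₁ γ₂ _ hlt
  obtain ⟨s₀, hs₀⟩ : ∃ s, 0 < γ₁ + d s := by
    by_contra! h
    exact (posPartSum_eq_zero h).not_gt hγ₁
  apply sum_lt_sum
  · exact fun s _ => mul_le_mul_of_nonneg_left (max_le_max (by linarith) le_rfl) (ha s).le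
  · refine ⟨s₀, mem_univ s₀, mul_lt_mul_of_pos_left ?_ (ha s₀)⟩
    rw [max_eq_left hs₀.le, max_eq_left (by linarith)]
    linarith

theorem existsUnique_posPartSum_eq [Nonempty ι] (ha : ∀ s, 0 < a s)
    {ρ : ℝ} (hρ : 0 < ρ) : ∃! γ, posPartSum a d γ = ρ := by
  obtain ⟨s₀⟩ := ‹Nonempty ι›
  have hlo : posPartSum a d (-∑ s, |d s|) ≤ ρ := by
    refine (posPartSum_eq_zero fun s => ?_).le.trans hρ.le
    have := single_le_sum (fun s _ => abs_nonneg (d s)) (mem_univ s)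
    linarith [le_abs_self (d s)]
  have hhi : ρ ≤ posPartSum a d (ρ / a s₀ - d s₀) := by
    have := mul_le_posPartSum (d := d) (fun s => (ha s).le) (ρ / a s₀ - d s₀) s₀
    rwa [sub_add_cancel, mul_div_cancel₀ _ (ha s₀).ne'] at this
  obtain ⟨γ, hγ⟩ := intermediate_value_univ _ _ continuous_posPartSum ⟨hlo, hhi⟩
  refine ⟨γ, hγ, fun γ' hγ' => (strictMonoOn_posPartSum ha).injOn ?_ ?_ (hγ'.trans hγ.symm)⟩
  exacts [show (0 : ℝ) < _ from hγ' ▸ hρ, show (0 : ℝ) < _ from hγ ▸ hρ]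

end PosPartSum

open scoped BigOperators

/-- Existence and uniqueness of the solution `γ` of the nonlinear equation
`a^T [−bα + γe + c]_+ = ρ` for every fixed `α`. -/
theorem stmt7 (S : ℕ) (hS : 0 < S)
    (a : Fin S → ℝ) (ha : ∀ s, 0 < a s)
    (b c : Fin S → ℝ) (ρ : ℝ) (hρ : 0 < ρ) (α : ℝ) :
    ∃! γ : ℝ, ∑ s, a s * max (-(b s) * α + γ + c s) 0 = ρ := by
  have : Nonempty (Fin S) := ⟨⟨0, hS⟩⟩
  have hrewrite : ∀ γ, ∑ s, a s * max (-(b s) * α + γ + c s) 0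
      = posPartSum a (fun s => c s - b s * α) γ := fun γ => by
    unfold posPartSum
    congr! 3
    ring
  simpa only [hrewrite] using existsUnique_posPartSum_eq ha hρ
end

section
/- Let S be a positive integer, a, b, c ∈ ℝ^S with a_s > 0 for all s, and ρ ∈ ℝ. For a nonempty finite subset I ⊆ {1,…,S} define γ_I(α) = (ρ + Σ_{s'∈I} a_{s'} (b_{s'} α − c_{s'})) / (Σ_{s'∈I} a_{s'}). Fix distinct indices s, t ∈ {1,…,S} and a nonempty I, and assume b_{s'} ≠ b_s for every s' ∈ I ∪ {t}. For indices i, j with b_i ≠ b_j write α_{i,j} = (c_i − c_j)/(b_i − b_j). If ρ + Σ_{s'∈I} a_{s'} (b_{s'} − b_s)(α_{s,t} − α_{s,s'}) ≠ 0, then there exists no α ∈ ℝ satisfying both −b_s α + γ_I(α) + c_s = 0 and −b_t α + γ_I(α) + c_t = 0. -/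
open scoped BigOperators

/-- Under the nondegeneracy condition of the paper's regularity assumption, no
two distinct component functions `−b_s α + γ_I(α) + c_s` and
`−b_t α + γ_I(α) + c_t` vanish at the same value of `α`. -/
theorem stmt11 (S : ℕ) (hS : 0 < S)
    (a b c : Fin S → ℝ) (ha : ∀ s, 0 < a s) (ρ : ℝ)
    (s t : Fin S) (hst : s ≠ t)
    (I : Finset (Fin S)) (hI : I.Nonempty)
    (hb : ∀ s' ∈ insert t I, b s' ≠ b s)
    (hnd : ρ + ∑ s' ∈ I, a s' * (b s' - b s) *
        ((c s - c t) / (b s - b t) - (c s - c s') / (b s - b s')) ≠ 0) :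
    ¬ ∃ α : ℝ,
        (-(b s) * α + (ρ + ∑ s' ∈ I, a s' * (b s' * α - c s')) / (∑ s' ∈ I, a s') + c s = 0) ∧
        (-(b t) * α + (ρ + ∑ s' ∈ I, a s' * (b s' * α - c s')) / (∑ s' ∈ I, a s') + c t = 0) := by
  rintro ⟨α, h1, h2⟩
  have hDpos : 0 < ∑ s' ∈ I, a s' := Finset.sum_pos (fun i _ => ha i) hI
  have hDne : (∑ s' ∈ I, a s') ≠ 0 := ne_of_gt hDpos
  have hbt : b s - b t ≠ 0 :=
    sub_ne_zero.mpr (Ne.symm (hb t (Finset.mem_insert_self t I)))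
  have hα : (c s - c t) / (b s - b t) = α := by
    have h3 : (b s - b t) * α = c s - c t := by linarith
    field_simp
    linarith
  have key : ρ + ∑ s' ∈ I, a s' * (b s' * α - c s')
      = (b s * α - c s) * ∑ s' ∈ I, a s' := by
    field_simp at h1
    have e : ∑ x ∈ I, a x * (α * b x - c x) = ∑ s' ∈ I, a s' * (b s' * α - c s') :=
      Finset.sum_congr rfl (fun x _ => by ring)
    linarith
  apply hnd
  rw [hα]
  have hterm : ∀ s' ∈ I, a s' * (b s' - b s) * (α - (c s - c s') / (b s - b s'))
      = a s' * (b s' * α - c s') - a s' * (b s * α - c s) := by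
    intro s' hs'
    have hbs' : b s - b s' ≠ 0 :=
      sub_ne_zero.mpr (Ne.symm (hb s' (Finset.mem_insert_of_mem hs')))
    field_simp
    ring
  rw [Finset.sum_congr rfl hterm, Finset.sum_sub_distrib, ← Finset.sum_mul]
  linarith
end

section
/- Let S be a positive integer, let p̄ be in the probability simplex Δ_S with p̄_s > 0 for all s, let b ∈ ℝ^S with b_s ≥ 0 for all s, and let β ∈ ℝ with min_s b_s ≤ β. Then, with the convention 0·log 0 = 0, inf{ Σ_{s=1}^S p_s · log(p_s / p̄_s) : p ∈ Δ_S, ⟨b, p⟩ ≤ β } = sup{ −β α − log( Σ_{s=1}^S p̄_s · exp(−α b_s) ) : α ∈ ℝ, α ≥ 0 }. -/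
open scoped BigOperators


lemma key_ineq (p q Z : ℝ) (hp : 0 ≤ p) (hq : 0 < q) (hZ : 0 < Z) :
    p - q / Z - p * Real.log Z ≤ p * Real.log (p / q) := by
  rcases hp.eq_or_lt with h | h
  · rw [← h]
    have : 0 ≤ q / Z := by positivity
    simp; linarith
  · have h1 : Real.log (q / (Z * p)) ≤ q / (Z * p) - 1 :=
      Real.log_le_sub_one_of_pos (by positivity)
    rw [Real.log_div hq.ne' (by positivity), Real.log_mul hZ.ne' h.ne'] at h1
    rw [Real.log_div h.ne' hq.ne']
    have h2 := mul_le_mul_of_nonneg_left h1 hp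
    have h3 : p * (q / (Z * p)) = q / Z := by field_simp
    nlinarith

lemma weak_dual (S : ℕ) (hS : 0 < S) (pbar p b : Fin S → ℝ) (β α : ℝ)
    (hpos : ∀ s, 0 < pbar s)
    -- nonempty

    (hp0 : ∀ s, 0 ≤ p s) (hp1 : ∑ s, p s = 1)
    (hfeas : ∑ s, b s * p s ≤ β) (hα : 0 ≤ α) :
    -β * α - Real.log (∑ s, pbar s * Real.exp (-(α * b s)))
      ≤ ∑ s, p s * Real.log (p s / pbar s) := by
  haveI : Nonempty (Fin S) := Fin.pos_iff_nonempty.mp hS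
  set q : Fin S → ℝ := fun s => pbar s * Real.exp (-(α * b s)) with hq
  have hqpos : ∀ s, 0 < q s := fun s => mul_pos (hpos s) (Real.exp_pos _)
  set Z : ℝ := ∑ s, q s with hZdef
  have hZ : 0 < Z := Finset.sum_pos (fun s _ => hqpos s) Finset.univ_nonempty
  have step1 : ∑ s, (p s - q s / Z - p s * Real.log Z) ≤ ∑ s, p s * Real.log (p s / q s) :=
    Finset.sum_le_sum fun s _ => key_ineq (p s) (q s) Z (hp0 s) (hqpos s) hZ
  have lhs1 : ∑ s, (p s - q s / Z - p s * Real.log Z) = -Real.log Z := by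
    rw [Finset.sum_sub_distrib, Finset.sum_sub_distrib, hp1, ← Finset.sum_div,
      ← Finset.sum_mul, hp1]
    field_simp
    rw [← hZdef]; ring
  have hterm : ∀ s, p s * Real.log (p s / q s)
      = p s * Real.log (p s / pbar s) + α * (b s * p s) := by
    intro s
    rcases (hp0 s).eq_or_lt with h | h
    · rw [← h]; ring
    · rw [Real.log_div h.ne' (hqpos s).ne', Real.log_div h.ne' (hpos s).ne',
        hq, Real.log_mul (hpos s).ne' (Real.exp_pos _).ne', Real.log_exp]
      ring
  have step2 : ∑ s, p s * Real.log (p s / q s)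
      = (∑ s, p s * Real.log (p s / pbar s)) + α * ∑ s, b s * p s := by
    rw [Finset.mul_sum, ← Finset.sum_add_distrib]
    exact Finset.sum_congr rfl fun s _ => hterm s
  have h4 : α * ∑ s, b s * p s ≤ α * β := mul_le_mul_of_nonneg_left hfeas hα
  rw [lhs1, step2] at step1
  linarith

lemma tilt_val (S : ℕ) (hS : 0 < S) (pbar b : Fin S → ℝ) (α Z : ℝ)
    (hpos : ∀ s, 0 < pbar s) (hZdef : Z = ∑ s, pbar s * Real.exp (-(α * b s))) :
    0 < Z ∧
    (∑ s, pbar s * Real.exp (-(α * b s)) / Z) = 1 ∧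
    (∑ s, (pbar s * Real.exp (-(α * b s)) / Z) *
        Real.log ((pbar s * Real.exp (-(α * b s)) / Z) / pbar s)
      = -(α * ∑ s, b s * (pbar s * Real.exp (-(α * b s)) / Z)) - Real.log Z) := by
  haveI : Nonempty (Fin S) := Fin.pos_iff_nonempty.mp hS
  have hZ : 0 < Z := by
    rw [hZdef]
    exact Finset.sum_pos (fun s _ => mul_pos (hpos s) (Real.exp_pos _)) Finset.univ_nonempty
  have hsum1 : (∑ s, pbar s * Real.exp (-(α * b s)) / Z) = 1 := by
    rw [← Finset.sum_div, ← hZdef, div_self hZ.ne']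
  refine ⟨hZ, hsum1, ?_⟩
  have hterm : ∀ s : Fin S, (pbar s * Real.exp (-(α * b s)) / Z) *
        Real.log ((pbar s * Real.exp (-(α * b s)) / Z) / pbar s)
      = -(α * (b s * (pbar s * Real.exp (-(α * b s)) / Z)))
        - (pbar s * Real.exp (-(α * b s)) / Z) * Real.log Z := by
    intro s
    have h1 : (pbar s * Real.exp (-(α * b s)) / Z) / pbar s = Real.exp (-(α * b s)) / Z := by
      rw [div_right_comm, mul_div_cancel_left₀ _ (hpos s).ne']
    rw [h1, Real.log_div (Real.exp_pos _).ne' hZ.ne', Real.log_exp]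
    ring
  rw [Finset.sum_congr rfl fun s _ => hterm s, Finset.sum_sub_distrib, Finset.sum_neg_distrib,
    ← Finset.mul_sum, ← Finset.sum_mul, hsum1, one_mul]

/-- Strong duality for the Kullback-Leibler projection problem: the minimal KL
divergence to `p̄` over the intersection of the simplex with the halfspace
`⟨b, p⟩ ≤ β` equals the optimal value of the univariate dual problem.
(In Lean, `Real.log 0 = 0`, so the convention `0 · log 0 = 0` is automatic.) -/
theorem stmt13 (S : ℕ) (hS : 0 < S)
    (pbar : Fin S → ℝ) (hpbar : pbar ∈ stdSimplex ℝ (Fin S)) (hpos : ∀ s, 0 < pbar s)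
    (b : Fin S → ℝ) (hb : ∀ s, 0 ≤ b s)
    (β : ℝ) (hβ : (⨅ s, b s) ≤ β) :
    sInf ((fun p : Fin S → ℝ => ∑ s, p s * Real.log (p s / pbar s)) ''
        {p ∈ stdSimplex ℝ (Fin S) | ∑ s, b s * p s ≤ β})
      = sSup ((fun α : ℝ =>
            -β * α - Real.log (∑ s, pbar s * Real.exp (-(α * b s)))) '' Set.Ici (0:ℝ)) := by
  haveI : Nonempty (Fin S) := Fin.pos_iff_nonempty.mp hS
  obtain ⟨hpb0, hpb1⟩ := hpbar
  set f : (Fin S → ℝ) → ℝ := fun p => ∑ s, p s * Real.log (p s / pbar s) with hf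
  set g : ℝ → ℝ := fun α => -β * α - Real.log (∑ s, pbar s * Real.exp (-(α * b s))) with hg
  set P : Set ℝ := f '' {p ∈ stdSimplex ℝ (Fin S) | ∑ s, b s * p s ≤ β} with hP
  set D : Set ℝ := g '' Set.Ici (0:ℝ) with hD
  -- minimum of b
  obtain ⟨s₀, hs₀⟩ := Finite.exists_min b
  have hbs₀ : b s₀ ≤ β := le_trans (le_ciInf hs₀) hβ
  -- a feasible primal point
  set e₀ : Fin S → ℝ := fun s => if s = s₀ then (1:ℝ) else 0 with he₀
  have he₀mem : e₀ ∈ {p ∈ stdSimplex ℝ (Fin S) | ∑ s, b s * p s ≤ β} := by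
    refine ⟨⟨fun s => by dsimp [e₀]; split <;> norm_num, by simp [e₀]⟩, ?_⟩
    simpa [e₀, mul_ite] using hbs₀
  have hPne : P.Nonempty := ⟨f e₀, e₀, he₀mem, rfl⟩
  have hDne : D.Nonempty := ⟨g 0, 0, Set.self_mem_Ici, rfl⟩
  -- weak duality
  have hweak : ∀ x ∈ D, ∀ y ∈ P, x ≤ y := by
    rintro x ⟨α, hα, rfl⟩ y ⟨p, ⟨⟨hp0, hp1⟩, hpfeas⟩, rfl⟩
    exact weak_dual S hS pbar p b β α hpos hp0 hp1 hpfeas hα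
  have hPbdd : BddBelow P := ⟨g 0, fun y hy => hweak _ ⟨0, Set.self_mem_Ici, rfl⟩ y hy⟩
  have hDbdd : BddAbove D := ⟨f e₀, fun x hx => hweak x hx _ ⟨e₀, he₀mem, rfl⟩⟩
  have hdir1 : sSup D ≤ sInf P :=
    csSup_le hDne fun x hx => le_csInf hPne fun y hy => hweak x hx y hy
  refine le_antisymm ?_ hdir1
  -- strong duality: case analysis
  set B : ℝ := ∑ s, b s * pbar s with hB
  by_cases hA : B ≤ β
  · -- pbar is feasible, both values are 0
    have hfpbar : f pbar = 0 := by
      simp only [hf]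
      refine Finset.sum_eq_zero fun s _ => ?_
      rw [div_self (hpos s).ne', Real.log_one, mul_zero]
    have hg0 : g 0 = 0 := by
      simp only [hg]
      simp [hpb1]
    have h1 : sInf P ≤ 0 := hfpbar ▸ csInf_le hPbdd ⟨pbar, ⟨⟨hpb0, hpb1⟩, hA⟩, rfl⟩
    have h2 : (0:ℝ) ≤ sSup D := hg0 ▸ le_csSup hDbdd ⟨0, Set.self_mem_Ici, rfl⟩
    linarith
  · push_neg at hA
    by_cases hBmin : b s₀ < β
    · -- interior case: find the dual optimizer by the intermediate value theorem
      set G : ℝ → ℝ := fun α => ∑ s, pbar s * (b s - β) * Real.exp (-(α * b s)) with hGdef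
      have hGcont : Continuous G := by
        apply continuous_finset_sum
        intro s _
        exact continuous_const.mul
          (Real.continuous_exp.comp (continuous_id.mul continuous_const).neg)
      have hG0 : G 0 = B - β := by
        calc G 0 = ∑ s, (b s * pbar s - β * pbar s) := by
              apply Finset.sum_congr rfl
              intro s _
              simp only [zero_mul, neg_zero, Real.exp_zero, mul_one]
              ring
          _ = B - β * ∑ s, pbar s := by
              rw [Finset.sum_sub_distrib, hB, ← Finset.mul_sum]
          _ = B - β := by rw [hpb1, mul_one]
      set F : ℝ → ℝ := fun α => ∑ s, pbar s * (b s - β) * Real.exp (-(α * (b s - b s₀))) with hFdef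
      have hGF : ∀ α, G α = Real.exp (-(α * b s₀)) * F α := by
        intro α
        rw [hGdef, hFdef]
        simp only
        rw [Finset.mul_sum]
        apply Finset.sum_congr rfl
        intro s _
        have h2 : -(α * b s₀) + -(α * (b s - b s₀)) = -(α * b s) := by ring
        calc pbar s * (b s - β) * Real.exp (-(α * b s))
            = pbar s * (b s - β) *
              (Real.exp (-(α * b s₀)) * Real.exp (-(α * (b s - b s₀)))) := by
              rw [← Real.exp_add, h2]
          _ = Real.exp (-(α * b s₀)) *
              (pbar s * (b s - β) * Real.exp (-(α * (b s - b s₀)))) := by ring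
      set L : ℝ := ∑ s, (if b s = b s₀ then pbar s * (b s - β) else 0) with hLdef
      have hFlim : Filter.Tendsto F Filter.atTop (nhds L) := by
        rw [hFdef, hLdef]
        apply tendsto_finset_sum
        intro s _
        by_cases hsb : b s = b s₀
        · simp only [hsb, sub_self, mul_zero, neg_zero, Real.exp_zero, mul_one, if_pos]
          exact tendsto_const_nhds
        · rw [if_neg hsb]
          have hgt : 0 < b s - b s₀ := sub_pos.2 ((hs₀ s).lt_of_ne (Ne.symm hsb))
          have h1 : Filter.Tendsto (fun α : ℝ => -(α * (b s - b s₀)))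
              Filter.atTop Filter.atBot :=
            Filter.tendsto_neg_atTop_atBot.comp (Filter.tendsto_id.atTop_mul_const hgt)
          simpa using tendsto_const_nhds.mul (Real.tendsto_exp_atBot.comp h1)
      have hLneg : L < 0 := by
        have h1 : L < ∑ _s : Fin S, (0:ℝ) := by
          apply Finset.sum_lt_sum
          · intro i _
            by_cases hib : b i = b s₀
            · rw [if_pos hib]
              apply mul_nonpos_of_nonneg_of_nonpos (hpos i).le
              rw [hib]; linarith
            · rw [if_neg hib]
          · refine ⟨s₀, Finset.mem_univ _, ?_⟩
            rw [if_pos rfl]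
            have := hpos s₀
            nlinarith
        simpa using h1
      obtain ⟨α₁, hα₁F, hα₁0⟩ :=
        ((hFlim.eventually_lt_const hLneg).and (Filter.eventually_ge_atTop (0:ℝ))).exists
      have hGα₁ : G α₁ ≤ 0 :=
        (hGF α₁ ▸ mul_neg_of_pos_of_neg (Real.exp_pos _) hα₁F).le
      have h0mem : (0:ℝ) ∈ Set.Icc (G α₁) (G 0) := ⟨hGα₁, by rw [hG0]; linarith⟩
      obtain ⟨αst, hαstIcc, hGαst⟩ := intermediate_value_Icc' hα₁0 hGcont.continuousOn h0mem
      have hαst0 : 0 ≤ αst := hαstIcc.1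
      -- the tilted distribution
      obtain ⟨hZpos, hsum1, hval⟩ :=
        tilt_val S hS pbar b αst (∑ s, pbar s * Real.exp (-(αst * b s))) hpos rfl
      set Z : ℝ := ∑ s, pbar s * Real.exp (-(αst * b s)) with hZdef
      set pst : Fin S → ℝ := fun s => pbar s * Real.exp (-(αst * b s)) / Z with hpstdef
      have hpst0 : ∀ s, 0 ≤ pst s := by
        intro s
        simp only [hpstdef]
        exact div_nonneg (mul_nonneg (hpos s).le (Real.exp_pos _).le) hZpos.le
      have hfeaseq : ∑ s, b s * pst s = β := by
        have hexp : ∑ s, b s * (pbar s * Real.exp (-(αst * b s))) = β * Z := by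
          have h1 : G αst = (∑ s, b s * (pbar s * Real.exp (-(αst * b s)))) - β * Z := by
            rw [hGdef, hZdef]
            simp only
            rw [Finset.mul_sum, ← Finset.sum_sub_distrib]
            apply Finset.sum_congr rfl
            intro s _
            ring
          rw [hGαst] at h1
          linarith
        calc ∑ s, b s * pst s
            = (∑ s, b s * (pbar s * Real.exp (-(αst * b s)))) / Z := by
              rw [Finset.sum_div]
              apply Finset.sum_congr rfl
              intro s _
              rw [hpstdef, mul_div_assoc]
          _ = β * Z / Z := by rw [hexp]
          _ = β := by field_simp
      have hfval : f pst = g αst := by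
        calc f pst = -(αst * ∑ s, b s * pst s) - Real.log Z := hval
          _ = -β * αst - Real.log Z := by rw [hfeaseq]; ring
          _ = g αst := by rw [hg]
      calc sInf P ≤ f pst := csInf_le hPbdd ⟨pst, ⟨⟨hpst0, hsum1⟩, hfeaseq.le⟩, rfl⟩
        _ = g αst := hfval
        _ ≤ sSup D := le_csSup hDbdd ⟨αst, hαst0, rfl⟩
    · -- boundary case: β = min b ; the dual value is approached in the limit
      have hβeq : β = b s₀ := le_antisymm (not_lt.1 hBmin) hbs₀
      classical
      set M : Finset (Fin S) := Finset.univ.filter (fun s => b s = β) with hM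
      have hs₀M : s₀ ∈ M := by simp [hM, hβeq]
      set pM : ℝ := ∑ s ∈ M, pbar s with hpM
      have hpMpos : 0 < pM := Finset.sum_pos (fun s _ => hpos s) ⟨s₀, hs₀M⟩
      set pst : Fin S → ℝ := fun s => if b s = β then pbar s / pM else 0 with hpstdef
      have hpst0 : ∀ s, 0 ≤ pst s := by
        intro s
        simp only [hpstdef]
        split
        · exact div_nonneg (hpos s).le hpMpos.le
        · exact le_refl 0
      have hpstsum : ∑ s, pst s = 1 := by
        simp only [hpstdef]
        rw [← Finset.sum_filter, ← hM, ← Finset.sum_div, ← hpM, div_self hpMpos.ne']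
      have hfeas : ∑ s, b s * pst s = β := by
        calc ∑ s, b s * pst s = ∑ s ∈ M, b s * (pbar s / pM) := by
              simp only [hpstdef, mul_ite, mul_zero]
              rw [← Finset.sum_filter, ← hM]
          _ = ∑ s ∈ M, β * (pbar s / pM) := by
              apply Finset.sum_congr rfl
              intro s hs
              rw [hM] at hs
              rw [(Finset.mem_filter.1 hs).2]
          _ = β * (pM / pM) := by rw [← Finset.mul_sum, ← Finset.sum_div, ← hpM]
          _ = β := by rw [div_self hpMpos.ne', mul_one]
      have hfval : f pst = -Real.log pM := by
        calc f pst = ∑ s, (if b s = β then pbar s / pM * (-Real.log pM) else 0) := by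
              simp only [hf, hpstdef]
              apply Finset.sum_congr rfl
              intro s _
              by_cases hsb : b s = β
              · rw [if_pos hsb, if_pos hsb, div_right_comm, div_self (hpos s).ne',
                  one_div, Real.log_inv]
              · rw [if_neg hsb, if_neg hsb, zero_mul]
          _ = ∑ s ∈ M, pbar s / pM * (-Real.log pM) := by rw [← Finset.sum_filter, ← hM]
          _ = pM / pM * (-Real.log pM) := by rw [← Finset.sum_mul, ← Finset.sum_div, ← hpM]
          _ = -Real.log pM := by rw [div_self hpMpos.ne', one_mul]
      -- the dual function tends to -log pM
      set T : ℝ → ℝ := fun α => ∑ s, pbar s * Real.exp (-(α * (b s - β))) with hT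
      have hTpos : ∀ α, 0 < T α := fun α =>
        Finset.sum_pos (fun s _ => mul_pos (hpos s) (Real.exp_pos _)) Finset.univ_nonempty
      have hgT : ∀ α, g α = -Real.log (T α) := by
        intro α
        have hsplit : (∑ s, pbar s * Real.exp (-(α * b s))) = Real.exp (-(α * β)) * T α := by
          rw [hT]
          simp only
          rw [Finset.mul_sum]
          apply Finset.sum_congr rfl
          intro s _
          have h2 : -(α * β) + -(α * (b s - β)) = -(α * b s) := by ring
          calc pbar s * Real.exp (-(α * b s))
              = pbar s * (Real.exp (-(α * β)) * Real.exp (-(α * (b s - β)))) := by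
                rw [← Real.exp_add, h2]
            _ = Real.exp (-(α * β)) * (pbar s * Real.exp (-(α * (b s - β)))) := by ring
        rw [hg]
        simp only
        rw [hsplit, Real.log_mul (Real.exp_pos _).ne' (hTpos α).ne', Real.log_exp]
        ring
      have hpMalt : pM = ∑ s, (if b s = β then pbar s else 0) := by
        rw [hpM, hM]
        exact Finset.sum_filter _ _
      have hTlim : Filter.Tendsto T Filter.atTop (nhds pM) := by
        rw [hT, hpMalt]
        apply tendsto_finset_sum
        intro s _
        by_cases hsb : b s = β
        · simp only [hsb, sub_self, mul_zero, neg_zero, Real.exp_zero, mul_one, if_pos]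
          exact tendsto_const_nhds
        · rw [if_neg hsb]
          have hgt : 0 < b s - β := by
            have := hs₀ s
            rw [← hβeq] at this
            exact sub_pos.2 (this.lt_of_ne (Ne.symm hsb))
          have h1 : Filter.Tendsto (fun α : ℝ => -(α * (b s - β)))
              Filter.atTop Filter.atBot :=
            Filter.tendsto_neg_atTop_atBot.comp (Filter.tendsto_id.atTop_mul_const hgt)
          simpa using tendsto_const_nhds.mul (Real.tendsto_exp_atBot.comp h1)
      have hglim : Filter.Tendsto g Filter.atTop (nhds (-Real.log pM)) := by
        have hcont : Filter.Tendsto (fun x => -Real.log x) (nhds pM) (nhds (-Real.log pM)) :=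
          ((Real.continuousAt_log hpMpos.ne').neg).tendsto
        exact (hcont.comp hTlim).congr fun α => (hgT α).symm
      have h2 : -Real.log pM ≤ sSup D :=
        le_of_tendsto hglim ((Filter.eventually_ge_atTop (0:ℝ)).mono
          fun α hα => le_csSup hDbdd ⟨α, hα, rfl⟩)
      have h1 : sInf P ≤ -Real.log pM :=
        hfval ▸ csInf_le hPbdd ⟨pst, ⟨⟨hpst0, hpstsum⟩, hfeas.le⟩, rfl⟩
      linarith
end

section
/- Let S be a positive integer, let p̄ be in the probability simplex Δ_S with p̄_s > 0 for all s, let b ∈ ℝ^S, and let β ∈ ℝ with β > min_s b_s. Define f(α) = −β α − log( Σ_{s=1}^S p̄_s · exp(−α b_s) ) and ᾱ = log(1 / min_s p̄_s) / (β − min_s b_s). Then f(ᾱ) ≤ 0; consequently, since f(0) = 0 and f is concave, sup{ f(α) : α ≥ 0 } = sup{ f(α) : α ∈ [0, ᾱ] }. -/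
open scoped BigOperators

/-- Localization of the maximizer of the KL dual objective: with
`ᾱ = log(1/min_s p̄_s)/(β − min_s b_s)` one has `f(ᾱ) ≤ 0`, and the supremum of
`f` over `[0, ∞)` equals the supremum over `[0, ᾱ]`. -/
theorem stmt15 (S : ℕ) (hS : 0 < S)
    (pbar : Fin S → ℝ) (hpbar : pbar ∈ stdSimplex ℝ (Fin S)) (hpos : ∀ s, 0 < pbar s)
    (b : Fin S → ℝ) (β : ℝ) (hβ : (⨅ s, b s) < β) :
    (fun α : ℝ => -β * α - Real.log (∑ s, pbar s * Real.exp (-(α * b s))))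
        (Real.log (1 / ⨅ s, pbar s) / (β - ⨅ s, b s)) ≤ 0 ∧
    sSup ((fun α : ℝ => -β * α - Real.log (∑ s, pbar s * Real.exp (-(α * b s)))) ''
        Set.Ici (0:ℝ))
      = sSup ((fun α : ℝ => -β * α - Real.log (∑ s, pbar s * Real.exp (-(α * b s)))) ''
          Set.Icc (0:ℝ) (Real.log (1 / ⨅ s, pbar s) / (β - ⨅ s, b s))) := by
  have hne : Nonempty (Fin S) := ⟨⟨0, hS⟩⟩
  set f : ℝ → ℝ := fun α : ℝ => -β * α - Real.log (∑ s, pbar s * Real.exp (-(α * b s)))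
    with hf
  obtain ⟨s0, hs0⟩ := Finite.exists_min b
  obtain ⟨t0, ht0⟩ := Finite.exists_min pbar
  have hib_eq : (⨅ s, b s) = b s0 :=
    le_antisymm (ciInf_le (Finite.bddBelow_range b) s0) (le_ciInf hs0)
  have hip_eq : (⨅ s, pbar s) = pbar t0 :=
    le_antisymm (ciInf_le (Finite.bddBelow_range pbar) t0) (le_ciInf ht0)
  have hip_pos : 0 < ⨅ s, pbar s := hip_eq ▸ hpos t0
  have hip_le_one : (⨅ s, pbar s) ≤ 1 := by
    rw [hip_eq]
    calc pbar t0 ≤ ∑ s, pbar s := by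
          exact Finset.single_le_sum (fun i _ => (hpos i).le) (Finset.mem_univ t0)
      _ = 1 := hpbar.2
  set L : ℝ := Real.log (1 / ⨅ s, pbar s) with hL
  set D : ℝ := β - ⨅ s, b s with hD
  have hD_pos : 0 < D := sub_pos.mpr hβ
  have hL_nonneg : 0 ≤ L := Real.log_nonneg (by
    rw [le_div_iff₀ hip_pos]; simpa using hip_le_one)
  have hL_eq : L = -Real.log (⨅ s, pbar s) := by
    rw [hL, one_div, Real.log_inv]
  have hα_nonneg : 0 ≤ L / D := div_nonneg hL_nonneg hD_pos.le
  -- positivity of the sum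
  have hsum_pos : ∀ α : ℝ, 0 < ∑ s, pbar s * Real.exp (-(α * b s)) := by
    intro α
    exact Finset.sum_pos (fun i _ => mul_pos (hpos i) (Real.exp_pos _))
      Finset.univ_nonempty
  -- key upper bound
  have hkey : ∀ α : ℝ, f α ≤ L - α * D := by
    intro α
    have h1 : pbar s0 * Real.exp (-(α * b s0)) ≤ ∑ s, pbar s * Real.exp (-(α * b s)) :=
      Finset.single_le_sum (f := fun s => pbar s * Real.exp (-(α * b s)))
        (fun i _ => (mul_pos (hpos i) (Real.exp_pos _)).le) (Finset.mem_univ s0)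
    have h2 : Real.log (pbar s0 * Real.exp (-(α * b s0)))
        ≤ Real.log (∑ s, pbar s * Real.exp (-(α * b s))) :=
      Real.log_le_log (mul_pos (hpos s0) (Real.exp_pos _)) h1
    rw [Real.log_mul (hpos s0).ne' (Real.exp_pos _).ne', Real.log_exp] at h2
    have h3 : Real.log (⨅ s, pbar s) ≤ Real.log (pbar s0) :=
      Real.log_le_log hip_pos (hip_eq ▸ ht0 s0)
    have h4 : b s0 = β - D := by rw [hD, hib_eq]; ring
    have h5 : L = -Real.log (⨅ s, pbar s) := hL_eq
    have h6 : -β * α - (Real.log (pbar s0) + -(α * b s0)) = -Real.log (pbar s0) - α * D := by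
      rw [h4]; ring
    simp only [hf]
    linarith [h2, h3, h5, h6]
  have hf0 : f 0 = 0 := by
    simp only [hf]
    have : ∑ s, pbar s * Real.exp (-((0:ℝ) * b s)) = 1 := by
      simp [hpbar.2]
    rw [this]
    simp
  have hfbar : f (L / D) ≤ 0 := by
    have := hkey (L / D)
    rw [div_mul_cancel₀ _ hD_pos.ne'] at this
    linarith
  refine ⟨hfbar, ?_⟩
  have hbdd : ∀ α : ℝ, 0 ≤ α → f α ≤ L := by
    intro α hα
    have := hkey α
    nlinarith [mul_nonneg hα hD_pos.le]
  have hbddIci : BddAbove (f '' Set.Ici (0:ℝ)) := by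
    refine ⟨L, ?_⟩
    rintro y ⟨α, hα, rfl⟩
    exact hbdd α hα
  have hbddIcc : BddAbove (f '' Set.Icc (0:ℝ) (L / D)) := by
    refine ⟨L, ?_⟩
    rintro y ⟨α, hα, rfl⟩
    exact hbdd α hα.1
  have hneIcc : (f '' Set.Icc (0:ℝ) (L / D)).Nonempty :=
    ⟨f 0, Set.mem_image_of_mem f ⟨le_refl 0, hα_nonneg⟩⟩
  have hneIci : (f '' Set.Ici (0:ℝ)).Nonempty :=
    ⟨f 0, Set.mem_image_of_mem f Set.self_mem_Ici⟩
  apply le_antisymm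
  · apply csSup_le hneIci
    rintro y ⟨α, hα, rfl⟩
    by_cases hle : α ≤ L / D
    · exact le_csSup hbddIcc (Set.mem_image_of_mem f ⟨hα, hle⟩)
    · have h0mem : f 0 ∈ f '' Set.Icc (0:ℝ) (L / D) :=
        Set.mem_image_of_mem f ⟨le_refl 0, hα_nonneg⟩
      have : f α ≤ 0 := by
        have hk := hkey α
        have h7 : L ≤ α * D := (div_le_iff₀ hD_pos).mp (not_le.mp hle).le
        linarith
      calc f α ≤ f 0 := by rw [hf0]; exact this
        _ ≤ sSup (f '' Set.Icc (0:ℝ) (L / D)) := le_csSup hbddIcc h0mem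
  · exact csSup_le_csSup hbddIci hneIcc
      (Set.image_mono (fun x hx => hx.1))
end

section
/- Let P ∈ (0, 1/2) and define g : ℝ → ℝ by g(α) = −(3/2) α − log( P·exp(−α) + (1 − P)·exp(−2α) ), and set α* = log((1 − P)/P). Then g is strictly concave on ℝ, g'(α*) = 0, α* > 0, and α* is the unique global maximizer of g over ℝ; in particular, g(α) < g(α*) for every α ≥ 0 with α ≠ α*. -/
/-- The explicit two-state KL example: `g` is strictly concave, its derivative
vanishes at `α* = log((1−P)/P)`, `α* > 0`, and `α*` is the unique global
maximizer of `g` over ℝ. -/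
theorem stmt17 (P : ℝ) (hP : P ∈ Set.Ioo (0:ℝ) (1/2)) :
    StrictConcaveOn ℝ Set.univ
      (fun α : ℝ => -(3/2) * α -
        Real.log (P * Real.exp (-α) + (1 - P) * Real.exp (-(2 * α)))) ∧
    deriv (fun α : ℝ => -(3/2) * α -
        Real.log (P * Real.exp (-α) + (1 - P) * Real.exp (-(2 * α))))
      (Real.log ((1 - P) / P)) = 0 ∧
    0 < Real.log ((1 - P) / P) ∧
    (∀ α : ℝ, α ≠ Real.log ((1 - P) / P) →
      (fun α : ℝ => -(3/2) * α -
        Real.log (P * Real.exp (-α) + (1 - P) * Real.exp (-(2 * α)))) α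
      < (fun α : ℝ => -(3/2) * α -
        Real.log (P * Real.exp (-α) + (1 - P) * Real.exp (-(2 * α))))
          (Real.log ((1 - P) / P))) := by
  obtain ⟨hP0, hP2⟩ := hP
  have hc : 0 < 1 - P := by linarith
  have hPc : P < 1 - P := by linarith
  set a := Real.log ((1 - P) / P) with ha
  have hfpos : ∀ x : ℝ, 0 < P * Real.exp x + (1 - P) := fun x => by positivity
  -- rewrite g into the simpler form G α = α/2 - log (P e^α + (1-P))
  have hgeq : (fun α : ℝ => -(3/2) * α -
        Real.log (P * Real.exp (-α) + (1 - P) * Real.exp (-(2 * α))))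
      = fun α : ℝ => α / 2 - Real.log (P * Real.exp α + (1 - P)) := by
    funext α
    have he : Real.exp (-(2 * α)) * Real.exp α = Real.exp (-α) := by
      rw [← Real.exp_add]; ring_nf
    have h1 : P * Real.exp (-α) + (1 - P) * Real.exp (-(2 * α))
        = Real.exp (-(2 * α)) * (P * Real.exp α + (1 - P)) := by
      rw [← he]; ring
    rw [h1, Real.log_mul (Real.exp_ne_zero _) (ne_of_gt (hfpos α)), Real.log_exp]
    ring
  rw [hgeq]
  set G : ℝ → ℝ := fun α : ℝ => α / 2 - Real.log (P * Real.exp α + (1 - P)) with hG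
  set D : ℝ → ℝ := fun x => 1/2 - P * Real.exp x / (P * Real.exp x + (1 - P)) with hD
  have hderiv : ∀ x : ℝ, HasDerivAt G (D x) x := by
    intro x
    have h1 : HasDerivAt (fun x : ℝ => P * Real.exp x + (1 - P)) (P * Real.exp x) x :=
      ((Real.hasDerivAt_exp x).const_mul P).add_const _
    have h2 : HasDerivAt (fun x : ℝ => Real.log (P * Real.exp x + (1 - P)))
        (P * Real.exp x / (P * Real.exp x + (1 - P))) x :=
      h1.log (ne_of_gt (hfpos x))
    have h3 : HasDerivAt (fun x : ℝ => x / 2) (1/2 : ℝ) x := by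
      simpa using (hasDerivAt_id x).div_const 2
    exact h3.sub h2
  have hderivG : deriv G = D := funext fun x => (hderiv x).deriv
  have hexpa : Real.exp a = (1 - P) / P := Real.exp_log (by positivity)
  have hPea : P * Real.exp a = 1 - P := by
    rw [hexpa]; field_simp
  -- sign of D
  have hDpos : ∀ x, x < a → 0 < D x := by
    intro x hx
    have h1 : Real.exp x < Real.exp a := Real.exp_lt_exp.2 hx
    have h2 : P * Real.exp x < 1 - P := by nlinarith [Real.exp_pos x]
    have h3 := hfpos x
    rw [hD]
    rw [lt_sub_iff_add_lt, zero_add, div_lt_iff₀ h3]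
    linarith
  have hDneg : ∀ x, a < x → D x < 0 := by
    intro x hx
    have h1 : Real.exp a < Real.exp x := Real.exp_lt_exp.2 hx
    have h2 : 1 - P < P * Real.exp x := by nlinarith [Real.exp_pos a]
    have h3 := hfpos x
    rw [hD, sub_neg, lt_div_iff₀ h3]
    linarith
  have hDanti : StrictAnti D := by
    intro x y hxy
    have h1 : Real.exp x < Real.exp y := Real.exp_lt_exp.2 hxy
    have hx := hfpos x
    have hy := hfpos y
    have key : P * Real.exp x / (P * Real.exp x + (1 - P))
        < P * Real.exp y / (P * Real.exp y + (1 - P)) := by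
      rw [div_lt_div_iff₀ hx hy]
      nlinarith [mul_lt_mul_of_pos_left h1 (mul_pos hP0 hc)]
    simp only [hD]
    linarith
  have hcont : Continuous G := by
    have : Differentiable ℝ G := fun x => (hderiv x).differentiableAt
    exact this.continuous
  have hconc : StrictConcaveOn ℝ Set.univ G :=
    StrictAnti.strictConcaveOn_univ_of_deriv hcont (hderivG ▸ hDanti)
  refine ⟨hconc, ?_, ?_, ?_⟩
  · rw [hderivG, hD]
    simp only [hPea]
    have : (1 - P) + (1 - P) ≠ 0 := by linarith
    field_simp
    ring
  · rw [ha]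
    apply Real.log_pos
    rw [lt_div_iff₀ hP0]
    linarith
  · intro α hne
    rcases lt_or_gt_of_ne hne with h | h
    · -- increasing on Iic a
      have hmono : StrictMonoOn G (Set.Iic a) := by
        apply strictMonoOn_of_deriv_pos (convex_Iic a) hcont.continuousOn
        intro x hx
        rw [interior_Iic] at hx
        rw [hderivG]
        exact hDpos x hx
      exact hmono (le_of_lt h) (le_refl a) h
    · have hanti : StrictAntiOn G (Set.Ici a) := by
        apply strictAntiOn_of_deriv_neg (convex_Ici a) hcont.continuousOn
        intro x hx
        rw [interior_Ici] at hx
        rw [hderivG]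
        exact hDneg x hx
      exact hanti (le_refl a) (le_of_lt h) h
end

section
/- Let S be a positive integer, let p̄ be in the probability simplex Δ_S with p̄_s > 0 for all s, let b ∈ ℝ^S with b_s ≥ 0 for all s, and let β ∈ ℝ with min_s b_s < β. Then inf{ Σ_{s=1}^S p̄_s · log(p̄_s / p_s) : p ∈ Δ_S, p_s > 0 for all s, ⟨b, p⟩ ≤ β } = sup{ Σ_{s=1}^S p̄_s · log( 1 + α (b_s − β)/(β − min_{s'} b_{s'}) ) : α ∈ [0, 1) }, where for every α ∈ [0, 1) all arguments of the logarithms on the right-hand side are strictly positive. -/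
/-!
Weak duality is Gibbs' inequality `log x ≤ x - 1` applied termwise: for any positive weights `c`
with `∑ q_s c_s ≤ 1` one has `∑ p̄_s log c_s ≤ ∑ p̄_s log (p̄_s / q_s)`, and the dual factors
`c_s = 1 + α (b_s - β) / (β - min b)` satisfy this for every feasible `q`.

For strong duality, if `p̄` itself is feasible take `α = 0`. Otherwise the slope
`g(α) = ∑ p̄_s (b_s - β) / c_s` of the dual objective is positive at `α = 0` and tends to `-∞` as
`α → 1`, because the factor at a minimiser of `b` is `1 - α`. A zero `α*` of `g` yields the primal
point `p_s = p̄_s / c_s`, which lies in the simplex, meets the constraint with equality, and has the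
same objective value.
-/

open Finset Real

lemma sInf_eq_sSup_of_forall_le_of_mem {α : Type*} [ConditionallyCompleteLattice α]
    {A B : Set α} (h : ∀ a ∈ A, ∀ b ∈ B, b ≤ a) {c : α} (hcA : c ∈ A) (hcB : c ∈ B) :
    sInf A = sSup B :=
  (IsLeast.csInf_eq ⟨hcA, fun a ha => h a ha c hcB⟩).trans
    (IsGreatest.csSup_eq ⟨hcB, fun b hb => h c hcA b hb⟩).symm

lemma sum_mul_log_le_sum_mul_log_div {ι : Type*} [Fintype ι] {p q c : ι → ℝ}
    (hp : ∑ s, p s = 1) (hp_pos : ∀ s, 0 < p s) (hq_pos : ∀ s, 0 < q s) (hc_pos : ∀ s, 0 < c s)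
    (hqc : ∑ s, q s * c s ≤ 1) :
    ∑ s, p s * log (c s) ≤ ∑ s, p s * log (p s / q s) := by
  have hterm : ∀ s, p s * log (c s) ≤ p s * log (p s / q s) + (q s * c s - p s) := by
    intro s
    have hp := hp_pos s
    have hq := hq_pos s
    have hc := hc_pos s
    have key := mul_le_mul_of_nonneg_left
      (log_le_sub_one_of_pos (by positivity : 0 < q s * c s / p s)) hp.le
    rw [mul_sub_one, mul_div_cancel₀ _ hp.ne', log_div (by positivity) hp.ne',
      log_mul hq.ne' hc.ne'] at key
    rw [log_div hp.ne' hq.ne']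
    linarith
  calc ∑ s, p s * log (c s) ≤ ∑ s, (p s * log (p s / q s) + (q s * c s - p s)) :=
        sum_le_sum fun s _ => hterm s
    _ = ∑ s, p s * log (p s / q s) + (∑ s, q s * c s - 1) := by
        rw [sum_add_distrib, sum_sub_distrib, hp]
    _ ≤ ∑ s, p s * log (p s / q s) := by linarith

section DualFactor

variable {ι : Type*} {pbar q b : ι → ℝ} {β m α : ℝ}

/-- Here `m` stands for `min_s b_s`. -/
noncomputable def dualFactor (b : ι → ℝ) (β m α : ℝ) (s : ι) : ℝ :=
  1 + α * (b s - β) / (β - m)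

lemma dualFactor_zero (s : ι) : dualFactor b β m 0 s = 1 := by
  simp [dualFactor]

lemma dualFactor_pos (hm : ∀ s, m ≤ b s) (hmβ : m < β) (hα : α ∈ Set.Ico 0 1) (s : ι) :
    0 < dualFactor b β m α s := by
  have hd : 0 < β - m := sub_pos.2 hmβ
  have hconvex : dualFactor b β m α s = ((1 - α) * (β - m) + α * (b s - m)) / (β - m) := by
    unfold dualFactor; field_simp; ring
  rw [hconvex]
  exact div_pos (add_pos_of_pos_of_nonneg (mul_pos (sub_pos.2 hα.2) hd)
    (mul_nonneg hα.1 (sub_nonneg.2 (hm s)))) hd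

lemma one_le_dualFactor (hmβ : m < β) (hα : 0 ≤ α) {s : ι} (hs : β ≤ b s) :
    1 ≤ dualFactor b β m α s :=
  le_add_of_nonneg_right <|
    div_nonneg (mul_nonneg hα (sub_nonneg.2 hs)) (sub_pos.2 hmβ).le

variable [Fintype ι]

/-- `β - m` times the derivative in `α` of the dual objective `∑ p̄_s log (dualFactor b β m α s)`. -/
noncomputable def dualSlope (pbar b : ι → ℝ) (β m α : ℝ) : ℝ :=
  ∑ s, pbar s * (b s - β) / dualFactor b β m α s

lemma sum_mul_dualFactor (hq : ∑ s, q s = 1) :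
    ∑ s, q s * dualFactor b β m α s = 1 + α * (∑ s, b s * q s - β) / (β - m) := by
  have hterm : ∀ s, q s * dualFactor b β m α s = q s + α / (β - m) * (b s * q s - β * q s) :=
    fun s => by unfold dualFactor; ring
  simp only [hterm, sum_add_distrib, ← mul_sum, sum_sub_distrib, hq]
  ring

theorem sum_mul_log_dualFactor_le (hpbar : ∑ s, pbar s = 1) (hpbar_pos : ∀ s, 0 < pbar s)
    (hq : ∑ s, q s = 1) (hq_pos : ∀ s, 0 < q s) (hqb : ∑ s, b s * q s ≤ β)
    (hm : ∀ s, m ≤ b s) (hmβ : m < β) (hα : α ∈ Set.Ico 0 1) :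
    ∑ s, pbar s * log (dualFactor b β m α s) ≤ ∑ s, pbar s * log (pbar s / q s) := by
  refine sum_mul_log_le_sum_mul_log_div hpbar hpbar_pos hq_pos (dualFactor_pos hm hmβ hα) ?_
  rw [sum_mul_dualFactor hq]
  have : α * (∑ s, b s * q s - β) / (β - m) ≤ 0 :=
    div_nonpos_of_nonpos_of_nonneg (mul_nonpos_of_nonneg_of_nonpos hα.1 (by linarith))
      (sub_pos.2 hmβ).le
  linarith

lemma dualSlope_zero (hpbar : ∑ s, pbar s = 1) :
    dualSlope pbar b β m 0 = ∑ s, b s * pbar s - β := by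
  simp only [dualSlope, dualFactor_zero, div_one, mul_sub, sum_sub_distrib, ← sum_mul, hpbar,
    one_mul, mul_comm (b _)]

lemma continuousOn_dualSlope (hm : ∀ s, m ≤ b s) (hmβ : m < β) :
    ContinuousOn (dualSlope pbar b β m) (Set.Ico 0 1) := by
  refine continuousOn_finsetSum _ fun s _ => continuousOn_const.div ?_ ?_
  · unfold dualFactor; fun_prop
  · exact fun α hα => (dualFactor_pos hm hmβ hα s).ne'

lemma dualSlope_le_add_sum_erase_abs [DecidableEq ι] (hpbar_pos : ∀ s, 0 < pbar s)
    (hm : ∀ s, m ≤ b s) (hmβ : m < β) (hα : α ∈ Set.Ico 0 1) (s₀ : ι) :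
    dualSlope pbar b β m α ≤
      pbar s₀ * (b s₀ - β) / dualFactor b β m α s₀ +
        ∑ s ∈ univ.erase s₀, pbar s * |b s - β| := by
  rw [dualSlope, ← add_sum_erase _ _ (mem_univ s₀)]
  gcongr with s
  have hc := dualFactor_pos hm hmβ hα s
  rcases le_or_gt β (b s) with hs | hs
  · rw [abs_of_nonneg (sub_nonneg.2 hs)]
    exact div_le_self (mul_nonneg (hpbar_pos s).le (sub_nonneg.2 hs))
      (one_le_dualFactor hmβ hα.1 hs)
  · exact (div_nonpos_of_nonpos_of_nonneg
      (mul_nonpos_of_nonneg_of_nonpos (hpbar_pos s).le (sub_neg.2 hs).le) hc.le).trans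
      (mul_nonneg (hpbar_pos s).le (abs_nonneg _))

/-- At a minimiser `s₀` of `b` the factor is `1 - α`; `α₁` is chosen so that this single term
outweighs all the others. -/
lemma exists_dualSlope_neg (hpbar_pos : ∀ s, 0 < pbar s) (hm : ∀ s, m ≤ b s) (hmβ : m < β)
    {s₀ : ι} (hs₀ : b s₀ = m) :
    ∃ α₁ ∈ Set.Ico (0 : ℝ) 1, dualSlope pbar b β m α₁ < 0 := by
  classical
  set C := ∑ s ∈ univ.erase s₀, pbar s * |b s - β|
  set K := pbar s₀ * (β - m)
  have hC : 0 ≤ C := sum_nonneg fun s _ => mul_nonneg (hpbar_pos s).le (abs_nonneg _)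
  have hd : 0 < β - m := sub_pos.2 hmβ
  have hK : 0 < K := mul_pos (hpbar_pos s₀) hd
  have hα₁ : C / (C + K) ∈ Set.Ico (0 : ℝ) 1 :=
    ⟨by positivity, (div_lt_one (by positivity)).2 (by linarith)⟩
  have hfactor : dualFactor b β m (C / (C + K)) s₀ = K / (C + K) := by
    rw [dualFactor, hs₀]; field_simp; ring
  have hterm : pbar s₀ * (b s₀ - β) / dualFactor b β m (C / (C + K)) s₀ = -(C + K) := by
    rw [hfactor, hs₀]; field_simp; ring
  refine ⟨C / (C + K), hα₁, ?_⟩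
  have := dualSlope_le_add_sum_erase_abs hpbar_pos hm hmβ hα₁ s₀
  linarith

lemma sum_div_dualFactor (hc : ∀ s, dualFactor b β m α s ≠ 0) :
    ∑ s, pbar s / dualFactor b β m α s =
      ∑ s, pbar s - α / (β - m) * dualSlope pbar b β m α := by
  rw [dualSlope, mul_sum, ← sum_sub_distrib]
  refine sum_congr rfl fun s _ => ?_
  have := hc s
  unfold dualFactor at this ⊢
  field_simp
  ring

lemma sum_mul_div_dualFactor :
    ∑ s, b s * (pbar s / dualFactor b β m α s) =
      β * ∑ s, pbar s / dualFactor b β m α s + dualSlope pbar b β m α := by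
  rw [dualSlope, mul_sum, ← sum_add_distrib]
  exact sum_congr rfl fun s _ => by ring

/-- By complementary slackness, a zero of `dualSlope` yields the primal point `p̄ / dualFactor`. -/
theorem exists_primal_eq_dual (hpbar : ∑ s, pbar s = 1) (hpbar_pos : ∀ s, 0 < pbar s)
    (hm : ∀ s, m ≤ b s) (hmβ : m < β) {s₀ : ι} (hs₀ : b s₀ = m) :
    ∃ α ∈ Set.Ico (0 : ℝ) 1, ∃ p : ι → ℝ, (∑ s, p s = 1 ∧ (∀ s, 0 < p s) ∧ ∑ s, b s * p s ≤ β) ∧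
      ∑ s, pbar s * log (pbar s / p s) = ∑ s, pbar s * log (dualFactor b β m α s) := by
  by_cases hfeas : ∑ s, b s * pbar s ≤ β
  · exact ⟨0, ⟨le_rfl, one_pos⟩, pbar, ⟨hpbar, hpbar_pos, hfeas⟩, by simp [dualFactor_zero,
      div_self (hpbar_pos _).ne']⟩
  obtain ⟨α₁, hα₁, hneg⟩ := exists_dualSlope_neg hpbar_pos hm hmβ hs₀
  have hcont := (continuousOn_dualSlope (pbar := pbar) hm hmβ).mono
    (Set.Icc_subset_Ico_right hα₁.2)
  obtain ⟨α, hαI, hzero⟩ := intermediate_value_Icc' hα₁.1 hcont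
    ⟨hneg.le, by rw [dualSlope_zero hpbar]; linarith⟩
  have hα : α ∈ Set.Ico (0 : ℝ) 1 := ⟨hαI.1, hαI.2.trans_lt hα₁.2⟩
  have hc := dualFactor_pos hm hmβ hα
  have hsum : ∑ s, pbar s / dualFactor b β m α s = 1 := by
    rw [sum_div_dualFactor fun s => (hc s).ne', hzero, hpbar, mul_zero, sub_zero]
  refine ⟨α, hα, fun s => pbar s / dualFactor b β m α s,
    ⟨hsum, fun s => div_pos (hpbar_pos s) (hc s), ?_⟩, ?_⟩
  · rw [sum_mul_div_dualFactor, hsum, hzero, mul_one, add_zero]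
  · simp only [div_div_cancel₀ (hpbar_pos _).ne']

end DualFactor

theorem stmt18_general (S : ℕ)
    (pbar : Fin S → ℝ) (hpbar : pbar ∈ stdSimplex ℝ (Fin S)) (hpos : ∀ s, 0 < pbar s)
    (b : Fin S → ℝ)
    (β : ℝ) (hβ : (⨅ s, b s) < β) :
    (∀ α ∈ Set.Ico (0:ℝ) 1, ∀ s, 0 < 1 + α * (b s - β) / (β - ⨅ s', b s')) ∧
    sInf ((fun p : Fin S → ℝ => ∑ s, pbar s * Real.log (pbar s / p s)) ''
        {p : Fin S → ℝ | p ∈ stdSimplex ℝ (Fin S) ∧ (∀ s, 0 < p s) ∧ ∑ s, b s * p s ≤ β})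
      = sSup ((fun α : ℝ =>
            ∑ s, pbar s * Real.log (1 + α * (b s - β) / (β - ⨅ s', b s'))) ''
          Set.Ico (0:ℝ) 1) := by
  have : Nonempty (Fin S) :=
    univ_nonempty_iff.1 (nonempty_of_sum_ne_zero (hpbar.2.symm ▸ one_ne_zero))
  obtain ⟨s₀, hs₀⟩ := exists_eq_ciInf_of_finite (f := b)
  have hm : ∀ s, ⨅ s', b s' ≤ b s := ciInf_le (Finite.bddBelow_range b)
  refine ⟨fun α hα => dualFactor_pos hm hβ hα, ?_⟩
  obtain ⟨α, hα, p, ⟨hp, hp_pos, hpb⟩, hval⟩ := exists_primal_eq_dual hpbar.2 hpos hm hβ hs₀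
  refine sInf_eq_sSup_of_forall_le_of_mem ?_
    ⟨p, ⟨⟨fun s => (hp_pos s).le, hp⟩, hp_pos, hpb⟩, hval⟩ ⟨α, hα, rfl⟩
  rintro _ ⟨q, ⟨hq, hq_pos, hqb⟩, rfl⟩ _ ⟨α', hα', rfl⟩
  exact sum_mul_log_dualFactor_le hpbar.2 hpos hq.2 hq_pos hqb hm hβ hα'

/-- Strong duality for the Burg entropy projection problem: the minimal Burg
entropy divergence to `p̄` over the intersection of the (strictly positive part
of the) simplex with the halfspace `⟨b, p⟩ ≤ β` equals the optimal value of the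
univariate dual problem over `α ∈ [0, 1)`, on which all logarithm arguments are
strictly positive. -/
theorem stmt18 (S : ℕ) (hS : 0 < S)
    (pbar : Fin S → ℝ) (hpbar : pbar ∈ stdSimplex ℝ (Fin S)) (hpos : ∀ s, 0 < pbar s)
    (b : Fin S → ℝ) (hb : ∀ s, 0 ≤ b s)
    (β : ℝ) (hβ : (⨅ s, b s) < β) :
    (∀ α ∈ Set.Ico (0:ℝ) 1, ∀ s, 0 < 1 + α * (b s - β) / (β - ⨅ s', b s')) ∧
    sInf ((fun p : Fin S → ℝ => ∑ s, pbar s * Real.log (pbar s / p s)) ''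
        {p : Fin S → ℝ | p ∈ stdSimplex ℝ (Fin S) ∧ (∀ s, 0 < p s) ∧ ∑ s, b s * p s ≤ β})
      = sSup ((fun α : ℝ =>
            ∑ s, pbar s * Real.log (1 + α * (b s - β) / (β - ⨅ s', b s'))) ''
          Set.Ico (0:ℝ) 1) :=
  stmt18_general S pbar hpbar hpos b β hβ
end
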